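/- arXiv:0908.0165 — 9 statements merged into one kernel-verified Lean document; each statement's English description precedes it below -/
import Mathlib

section
/- Let C be an open nondegenerate convex cone in a finite-dimensional real vector space V, let F be a face of the closure of C, and let V^F denote the common zero set of all linear forms ξ ∈ C* (the dual cone) that vanish on F. Then for any p ∈ C + V^F and any q in the relative interior of F, there exists λ > 0 such that p + λq ∈ C. -/
/-!
It suffices to show `p ∈ C + ℝ q`: since `q ∈ closure C` and `C` is an open convex cone,
`C + closure C ⊆ C`, so a large positive multiple of `q` absorbs the `ℝ q`-component.
If `p ∉ C + ℝ q`, separate `p` from this open convex set by a functional `f`. Being bounded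
below on the line direction and on the cone, `f` kills `q` and is nonnegative on `closure C ⊇ F`;
a nonnegative functional vanishing at a relative interior point of `F` vanishes on `F`, so
`f ∈ C*` annihilates the `V^F`-component of `p`, contradicting the strict separation.
-/

open scoped Pointwise

open Set Filter Topology

section Cone

variable {V : Type*} [AddCommGroup V] [Module ℝ V] [TopologicalSpace V]
  [IsTopologicalAddGroup V] [ContinuousSMul ℝ V] {C : Set V}

theorem add_smul_mem_of_mem_closure (hCopen : IsOpen C) (hCconv : Convex ℝ C)
    (hCcone : ∀ x ∈ C, ∀ t : ℝ, 0 < t → t • x ∈ C) {x y : V} (hx : x ∈ C)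
    (hy : y ∈ closure C) {s : ℝ} (hs : 0 ≤ s) : x + s • y ∈ C := by
  have hs1 : 0 < 1 + s := by linarith
  have hcombo : (1 + s)⁻¹ • x + (s / (1 + s)) • y ∈ C := by
    simpa only [hCopen.interior_eq] using hCconv.combo_interior_closure_mem_interior
      (by rwa [hCopen.interior_eq]) hy (inv_pos.2 hs1) (div_nonneg hs hs1.le)
      (by field_simp)
  convert hCcone _ hcombo _ hs1 using 1
  rw [smul_add, smul_smul, smul_smul, mul_inv_cancel₀ hs1.ne', mul_div_cancel₀ _ hs1.ne',
    one_smul]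

theorem exists_pos_add_smul_mem_of_mem_add_span (hCopen : IsOpen C) (hCconv : Convex ℝ C)
    (hCcone : ∀ x ∈ C, ∀ t : ℝ, 0 < t → t • x ∈ C) {p q : V} (hq : q ∈ closure C)
    (hp : p ∈ C + (Submodule.span ℝ {q} : Set V)) : ∃ l : ℝ, 0 < l ∧ p + l • q ∈ C := by
  obtain ⟨c, hc, _, hw, rfl⟩ := hp
  obtain ⟨t, rfl⟩ := Submodule.mem_span_singleton.1 hw
  refine ⟨1 + |t|, by positivity, ?_⟩
  rw [add_assoc, ← add_smul]
  exact add_smul_mem_of_mem_closure hCopen hCconv hCcone hc hq (by linarith [neg_abs_le t])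

end Cone

section Functional

variable {V : Type*} [AddCommGroup V] [Module ℝ V]

theorem LinearMap.eq_zero_of_forall_lt_add_smul (f : V →ₗ[ℝ] ℝ) {a : ℝ} {x q : V}
    (h : ∀ t : ℝ, a < f (x + t • q)) : f q = 0 := by
  by_contra hq
  have := h ((a - f x) / f q)
  rw [map_add, map_smul, smul_eq_mul, div_mul_cancel₀ _ hq] at this
  linarith

theorem LinearMap.nonneg_of_forall_lt_of_cone (f : V →ₗ[ℝ] ℝ) {C : Set V}
    (hCcone : ∀ x ∈ C, ∀ t : ℝ, 0 < t → t • x ∈ C) {a : ℝ} (h : ∀ x ∈ C, a < f x) :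
    ∀ x ∈ C, 0 ≤ f x := by
  intro x hx
  by_contra! hfx
  have := h _ (hCcone x hx ((min a 0 - 1) / f x) (div_pos_of_neg_of_neg (by
    linarith [min_le_right a 0]) hfx))
  rw [map_smul, smul_eq_mul, div_mul_cancel₀ _ hfx.ne] at this
  linarith [min_le_left a 0]

end Functional

section Separation

variable {V : Type*} [AddCommGroup V] [Module ℝ V] [TopologicalSpace V]
  [IsTopologicalAddGroup V] [ContinuousSMul ℝ V]

theorem exists_pos_add_smul_sub_mem_of_mem_intrinsicInterior {F : Set V} {q x : V}
    (hq : q ∈ intrinsicInterior ℝ F) (hx : x ∈ F) : ∃ ε : ℝ, 0 < ε ∧ q + ε • (q - x) ∈ F := by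
  obtain ⟨y, hy, rfl⟩ := hq
  have hline (t : ℝ) : (y : V) + t • ((y : V) - x) ∈ affineSpan ℝ F := by
    simpa [vsub_eq_sub, vadd_eq_add, add_comm] using AffineSubspace.smul_vsub_vadd_mem _ t
      y.2 (subset_affineSpan ℝ F hx) y.2
  let g : ℝ → affineSpan ℝ F := fun t => ⟨_, hline t⟩
  have hg : Continuous g := by fun_prop
  have hnear : ∀ᶠ t in 𝓝 0, g t ∈ interior (((↑) : affineSpan ℝ F → V) ⁻¹' F) :=
    hg.continuousAt.preimage_mem_nhds (isOpen_interior.mem_nhds (by simpa [g] using hy))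
  obtain ⟨ε, hεF, hε⟩ := ((hnear.filter_mono nhdsWithin_le_nhds).and
    (self_mem_nhdsWithin : Ioi (0 : ℝ) ∈ 𝓝[>] 0)).exists
  exact ⟨ε, hε, interior_subset (s := ((↑) : affineSpan ℝ F → V) ⁻¹' F) hεF⟩

theorem LinearMap.eq_zero_of_nonneg_of_mem_intrinsicInterior (f : V →ₗ[ℝ] ℝ) {F : Set V}
    {q : V} (hF : ∀ x ∈ F, 0 ≤ f x) (hq : q ∈ intrinsicInterior ℝ F) (hfq : f q = 0) :
    ∀ x ∈ F, f x = 0 := by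
  intro x hx
  obtain ⟨ε, hε, hεF⟩ := exists_pos_add_smul_sub_mem_of_mem_intrinsicInterior hq hx
  have := hF _ hεF
  rw [map_add, map_smul, map_sub, hfq, smul_eq_mul, zero_add, zero_sub] at this
  nlinarith [hF x hx]

theorem exists_separating_of_notMem_add_span {C : Set V} (hCopen : IsOpen C)
    (hCconv : Convex ℝ C) (hCcone : ∀ x ∈ C, ∀ t : ℝ, 0 < t → t • x ∈ C) (hCne : C.Nonempty)
    {p q : V} (hp : p ∉ C + (Submodule.span ℝ {q} : Set V)) :
    ∃ f : StrongDual ℝ V, f q = 0 ∧ (∀ x ∈ C, 0 ≤ f x) ∧ ∀ x ∈ C, f p < f x := by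
  obtain ⟨f, hf⟩ :=
    geometric_hahn_banach_point_open (hCconv.add (Submodule.span ℝ {q}).convex) hCopen.add_right hp
  have hline (x : V) (hx : x ∈ C) (t : ℝ) : f p < f (x + t • q) :=
    hf _ (add_mem_add hx (Submodule.mem_span_singleton.2 ⟨t, rfl⟩))
  have hC (x : V) (hx : x ∈ C) : f p < f x := by simpa using hline x hx 0
  obtain ⟨c, hc⟩ := hCne
  exact ⟨f, (f : V →ₗ[ℝ] ℝ).eq_zero_of_forall_lt_add_smul (hline c hc),
    (f : V →ₗ[ℝ] ℝ).nonneg_of_forall_lt_of_cone hCcone hC, hC⟩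

end Separation

theorem stmt_1_general {V : Type*} [NormedAddCommGroup V] [NormedSpace ℝ V]
    (C : Set V) (hCopen : IsOpen C) (hCconv : Convex ℝ C)
    (hCcone : ∀ x ∈ C, ∀ t : ℝ, 0 < t → t • x ∈ C)
    (F : Set V) (hF : IsExtreme ℝ (closure C) F)
    (p : V)
    (hp : p ∈ C + {v : V | ∀ ξ : Module.Dual ℝ V,
      (∀ x ∈ C, 0 ≤ ξ x) → (∀ x ∈ F, ξ x = 0) → ξ v = 0})
    (q : V) (hq : q ∈ intrinsicInterior ℝ F) :
    ∃ l : ℝ, 0 < l ∧ p + l • q ∈ C := by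
  obtain ⟨c, hc, v, hv, rfl⟩ := hp
  refine exists_pos_add_smul_mem_of_mem_add_span hCopen hCconv hCcone
    (hF.1 (intrinsicInterior_subset hq)) ?_
  by_contra hnot
  obtain ⟨f, hfq, hfC, hsep⟩ :=
    exists_separating_of_notMem_add_span hCopen hCconv hCcone ⟨c, hc⟩ hnot
  have hfcl (x : V) (hx : x ∈ closure C) : 0 ≤ f x :=
    closure_minimal hfC (isClosed_le continuous_const f.continuous) hx
  have hfF : ∀ x ∈ F, f x = 0 := (f : V →ₗ[ℝ] ℝ).eq_zero_of_nonneg_of_mem_intrinsicInterior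
    (fun x hx => hfcl x (hF.1 hx)) hq hfq
  have hfv : f v = 0 := hv f hfC hfF
  simpa [hfv] using hsep c hc

/-- Let `C` be an open nondegenerate convex cone in a finite-dimensional
real vector space `V`, `F` a face of `closure C`, and `V^F` the common zero set of
all linear forms in the dual cone `C*` that vanish on `F`. Then for any
`p ∈ C + V^F` and any `q` in the relative interior of `F`, there is `λ > 0` with
`p + λ • q ∈ C`. -/
theorem stmt_1 {V : Type*} [NormedAddCommGroup V] [NormedSpace ℝ V]
    [FiniteDimensional ℝ V]
    (C : Set V) (hCopen : IsOpen C) (hCconv : Convex ℝ C) (hCne : C.Nonempty)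
    (hCcone : ∀ x ∈ C, ∀ t : ℝ, 0 < t → t • x ∈ C)
    (hCnd : ∀ x v : V, v ≠ 0 → ¬ ∀ t : ℝ, x + t • v ∈ C)
    (F : Set V) (hF : IsExtreme ℝ (closure C) F)
    (p : V)
    (hp : p ∈ C + {v : V | ∀ ξ : Module.Dual ℝ V,
      (∀ x ∈ C, 0 ≤ ξ x) → (∀ x ∈ F, ξ x = 0) → ξ v = 0})
    (q : V) (hq : q ∈ intrinsicInterior ℝ F) :
    ∃ l : ℝ, 0 < l ∧ p + l • q ∈ C :=
  stmt_1_general C hCopen hCconv hCcone F hF p hp q hq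
end

section
/- Let C be an open nondegenerate convex cone in a finite-dimensional real vector space V and let K ⊆ closure(C) be a kernel for C, i.e., a nonempty convex subset with 0 ∉ closure(K) and K + C ⊆ K. Define K^∨ = {ξ ∈ V* : ξ(x) ≥ 1 for all x ∈ K}. Then (K^∨)^∨ = closure(K) (where the second dual is taken back in V via the canonical identification V** ≅ V). -/
/-!
Put `S = closure K`. The kernel axioms make `S` a closed convex set avoiding `0` that is stable
under the dilations `y ↦ t • y`, `t ≥ 1`, since `t • y = y + (t - 1) • y` with
`(t - 1) • y ∈ closure C`. For such a set a Hahn–Banach functional `f` with `f x < c < f` on `S`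
can always be normalised to one that is `≥ 1` on `S` and `< 1` at `x`: dilation stability forces
`f ≥ 0` on `S`, so if `c > 0` we rescale `f`, and otherwise we add a large multiple of `f` to a
functional that is `> 1` on `S`, obtained by separating `0` from `S`.
-/

open scoped Pointwise

section Kernel

variable {E : Type*} [TopologicalSpace E] [AddCommGroup E] [Module ℝ E]

theorem smul_mem_closure_of_forall_smul_mem [ContinuousConstSMul ℝ E] {C : Set E}
    (hC : ∀ x ∈ C, ∀ t : ℝ, 0 < t → t • x ∈ C) {x : E} (hx : x ∈ closure C) {t : ℝ}
    (ht : 0 < t) : t • x ∈ closure C :=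
  map_mem_closure (continuous_const_smul t) hx fun y hy => hC y hy t ht

theorem smul_mem_closure_of_add_subset [ContinuousAdd E] [ContinuousConstSMul ℝ E]
    {C K : Set E} (hC : ∀ x ∈ C, ∀ t : ℝ, 0 < t → t • x ∈ C) (hKsub : K ⊆ closure C)
    (hKC : K + C ⊆ K) {y : E} (hy : y ∈ closure K) {t : ℝ} (ht : 1 ≤ t) :
    t • y ∈ closure K := by
  rcases ht.eq_or_lt with rfl | ht
  · rwa [one_smul]
  have hyC : (t - 1) • y ∈ closure C :=
    smul_mem_closure_of_forall_smul_mem hC (closure_minimal hKsub isClosed_closure hy)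
      (sub_pos.2 ht)
  have hsum : y + (t - 1) • y ∈ closure K :=
    map_mem_closure₂ continuous_add hy hyC fun a ha b hb => hKC (Set.add_mem_add ha hb)
  rwa [sub_smul, one_smul, add_sub_cancel] at hsum

end Kernel

theorem nonneg_of_forall_lt_of_forall_smul_mem {E F : Type*} [AddCommGroup E] [Module ℝ E]
    [FunLike F E ℝ] [LinearMapClass F ℝ E ℝ] {S : Set E}
    (hS : ∀ y ∈ S, ∀ t : ℝ, 1 ≤ t → t • y ∈ S) (f : F) {c : ℝ} (hf : ∀ y ∈ S, c < f y)
    {y : E} (hy : y ∈ S) : 0 ≤ f y := by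
  by_contra! hneg
  set t := max 1 (c / f y)
  have hlt : c < t * f y := by simpa using hf _ (hS y hy t (le_max_left _ _))
  have hle : t * f y ≤ c / f y * f y :=
    mul_le_mul_of_nonpos_right (le_max_right _ _) hneg.le
  rw [div_mul_cancel₀ _ hneg.ne] at hle
  exact hle.not_gt hlt

section Separation

variable {E : Type*} [TopologicalSpace E] [AddCommGroup E] [Module ℝ E]
  [IsTopologicalAddGroup E] [ContinuousSMul ℝ E] [LocallyConvexSpace ℝ E] {S : Set E}

theorem exists_one_lt_of_zero_notMem (hSc : IsClosed S) (hSconv : Convex ℝ S)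
    (hS0 : (0 : E) ∉ S) : ∃ g : StrongDual ℝ E, ∀ y ∈ S, 1 < g y := by
  obtain ⟨g, d, hg0, hgS⟩ := geometric_hahn_banach_point_closed hSconv hSc hS0
  have hd : 0 < d := by simpa using hg0
  refine ⟨d⁻¹ • g, fun y hy => ?_⟩
  simpa [one_lt_inv_mul₀ hd] using hgS y hy

theorem exists_one_le_of_notMem (hSc : IsClosed S) (hSconv : Convex ℝ S) (hS0 : (0 : E) ∉ S)
    (hS : ∀ y ∈ S, ∀ t : ℝ, 1 ≤ t → t • y ∈ S) {x : E} (hx : x ∉ S) :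
    ∃ f : StrongDual ℝ E, (∀ y ∈ S, 1 ≤ f y) ∧ f x < 1 := by
  obtain ⟨f, c, hfx, hfS⟩ := geometric_hahn_banach_point_closed hSconv hSc hx
  rcases lt_or_ge 0 c with hc | hc
  · refine ⟨c⁻¹ • f, fun y hy => ?_, ?_⟩
    · simpa [le_inv_mul_iff₀ hc] using (hfS y hy).le
    · simpa [inv_mul_lt_iff₀ hc] using hfx
  obtain ⟨g, hgS⟩ := exists_one_lt_of_zero_notMem hSc hSconv hS0
  have hf0 : ∀ y ∈ S, 0 ≤ f y := fun y hy => nonneg_of_forall_lt_of_forall_smul_mem hS f hfS hy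
  have hfx0 : 0 < -f x := by linarith
  -- `s • f` outweighs `g` at `x`, so `g + s • f` is `≤ 0` there
  set s := |g x| / -f x
  have hs : 0 ≤ s := div_nonneg (abs_nonneg _) hfx0.le
  refine ⟨g + s • f, fun y hy => ?_, ?_⟩
  · have := mul_nonneg hs (hf0 y hy)
    simp only [add_apply, smul_apply, smul_eq_mul]
    linarith [hgS y hy]
  · have hsfx : s * f x = -|g x| := by
      rw [div_mul_eq_mul_div, div_eq_iff hfx0.ne']
      ring
    simp only [add_apply, smul_apply, smul_eq_mul]
    linarith [le_abs_self (g x)]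

end Separation

theorem stmt_2_general {V : Type*} [NormedAddCommGroup V] [NormedSpace ℝ V]
    [FiniteDimensional ℝ V]
    (C : Set V)
    (hCcone : ∀ x ∈ C, ∀ t : ℝ, 0 < t → t • x ∈ C)
    (K : Set V) (hKconv : Convex ℝ K)
    (hKsub : K ⊆ closure C) (hK0 : (0 : V) ∉ closure K)
    (hKC : K + C ⊆ K) :
    {x : V | ∀ ξ : Module.Dual ℝ V, (∀ y ∈ K, 1 ≤ ξ y) → 1 ≤ ξ x} = closure K := by
  have hdil : ∀ y ∈ closure K, ∀ t : ℝ, 1 ≤ t → t • y ∈ closure K := fun _ hy _ ht =>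
    smul_mem_closure_of_add_subset hCcone hKsub hKC hy ht
  ext x
  refine ⟨fun hx => ?_, fun hx ξ hξ => ?_⟩
  · by_contra hxK
    obtain ⟨f, hfK, hfx⟩ := exists_one_le_of_notMem isClosed_closure hKconv.closure hK0 hdil hxK
    exact hfx.not_ge (hx f.toLinearMap fun y hy => hfK y (subset_closure hy))
  · exact closure_minimal hξ
      (isClosed_le continuous_const (LinearMap.continuous_of_finiteDimensional ξ)) hx

/-- If `K` is a kernel for the open nondegenerate convex cone `C`
(a nonempty convex subset of `closure C` with `0 ∉ closure K` and `K + C ⊆ K`),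
then the double dual `(K^∨)^∨` (taken in `V` via `V** ≅ V`) equals `closure K`,
where `K^∨ = {ξ ∈ V* | ξ ≥ 1 on K}`. -/
theorem stmt_2 {V : Type*} [NormedAddCommGroup V] [NormedSpace ℝ V]
    [FiniteDimensional ℝ V]
    (C : Set V) (hCopen : IsOpen C) (hCconv : Convex ℝ C) (hCne : C.Nonempty)
    (hCcone : ∀ x ∈ C, ∀ t : ℝ, 0 < t → t • x ∈ C)
    (hCnd : ∀ x v : V, v ≠ 0 → ¬ ∀ t : ℝ, x + t • v ∈ C)
    (K : Set V) (hKne : K.Nonempty) (hKconv : Convex ℝ K)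
    (hKsub : K ⊆ closure C) (hK0 : (0 : V) ∉ closure K)
    (hKC : K + C ⊆ K) :
    {x : V | ∀ ξ : Module.Dual ℝ V, (∀ y ∈ K, 1 ≤ ξ y) → 1 ≤ ξ x} = closure K :=
  stmt_2_general C hCcone K hKconv hKsub hK0 hKC
end

section
/- Let C be an open nondegenerate convex cone in a finite-dimensional real vector space V, and let Λ be a discrete subset of closure(C). Then the set [Λ] + closure(C) (the Minkowski sum of the convex hull of Λ with the closed cone) is closed in V, and every extreme point of [Λ] + closure(C) belongs to Λ. -/
/-!
Write `K = closure C`. It is a closed convex cone, and it is salient (`K ∩ -K = {0}`) because `C`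
contains no line. Compactness of `{(x, y) ∈ K × K | ‖x‖ + ‖y‖ = 1}` then gives `c > 0` with
`c ‖x‖ ≤ ‖x + y‖` on `K`, so the summands of a bounded sum of elements of `K` are bounded.

By Carathéodory, the points of `[Λ] + K` are the sums `∑ yᵢ` over families of `dim V + 2` pairs
`(tᵢ, yᵢ)` with `∑ tᵢ = 1`, where `yᵢ = tᵢ λᵢ` with `λᵢ ∈ Λ` if `tᵢ > 0` and `yᵢ ∈ K` if `tᵢ = 0`.
These families form a closed set (`Λ` is closed, being discrete), on which the linear map
`(tᵢ, yᵢ)ᵢ ↦ ∑ yᵢ` has bounded preimages of bounded sets; so its image `[Λ] + K` is closed.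

If `b ∈ K` is nonzero, `a + b` is the midpoint of `a` and `a + 2b`; hence the extreme points of
`[Λ] + K` are extreme points of `[Λ]`, and these lie in `Λ`.
-/

open scoped Pointwise
open Set Filter Topology Metric Bornology

theorem isClosed_of_forall_exists_nhds_subsingleton {X : Type*} [TopologicalSpace X] [T1Space X]
    {s : Set X} (h : ∀ x, ∃ U ∈ 𝓝 x, (U ∩ s).Subsingleton) : IsClosed s := by
  refine (isClosed_and_discrete_iff.2 fun x => ?_).1
  obtain ⟨U, hU, hUs⟩ := h x
  rw [disjoint_principal_right]
  have hfar : ((U ∩ s) \ {x})ᶜ ∈ 𝓝 x :=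
    (hUs.anti sdiff_subset).isClosed.compl_mem_nhds (by simp)
  filter_upwards [nhdsWithin_le_nhds hU, nhdsWithin_le_nhds hfar, self_mem_nhdsWithin]
    with y hyU hy hyx hys using hy ⟨⟨hyU, hys⟩, hyx⟩

theorem IsClosed.image_of_isBounded_inter_preimage {X Y : Type*} [PseudoMetricSpace X]
    [ProperSpace X] [MetricSpace Y] {f : X → Y} (hf : Continuous f) {S : Set X}
    (hS : IsClosed S) (hbdd : ∀ B, IsBounded B → IsBounded (S ∩ f ⁻¹' B)) :
    IsClosed (f '' S) := by
  refine isClosed_of_closure_subset fun z hz => ?_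
  have hcpt : IsCompact (S ∩ f ⁻¹' closedBall z 1) :=
    isCompact_of_isClosed_isBounded (hS.inter (isClosed_closedBall.preimage hf))
      (hbdd _ isBounded_closedBall)
  have hz' : z ∈ closure (f '' (S ∩ f ⁻¹' closedBall z 1)) := by
    rw [image_inter_preimage, inter_comm]
    exact closure_mono (inter_subset_inter_left _ ball_subset_closedBall)
      (isOpen_ball.inter_closure ⟨mem_ball_self one_pos, hz⟩)
  exact image_mono inter_subset_left ((hcpt.image hf).isClosed.closure_subset hz')

section

variable {V : Type*} [NormedAddCommGroup V] [NormedSpace ℝ V]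

/-- Pairs `(s, s • λ)` with `s > 0` and `λ ∈ Λ`, and `(0, y)` with `y ∈ K`: the latter stand in for
the limits of `(s, s • λ)` as `s → 0`, which makes this set closed. -/
def weightedPoints (Λ K : Set V) : Set (ℝ × V) :=
  {p | 0 ≤ p.1 ∧ p.2 ∈ K ∧ (0 < p.1 → p.1⁻¹ • p.2 ∈ Λ)}

theorem mk_smul_mem_weightedPoints {Λ : Set V} {K : PointedCone ℝ V} (hΛK : Λ ⊆ K) {s : ℝ}
    (hs : 0 < s) {x : V} (hx : x ∈ Λ) : (s, s • x) ∈ weightedPoints Λ K :=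
  ⟨hs.le, K.smul_mem hs.le (hΛK hx), fun _ => by simpa [hs.ne'] using hx⟩

theorem mk_zero_mem_weightedPoints {Λ K : Set V} {y : V} (hy : y ∈ K) :
    ((0 : ℝ), y) ∈ weightedPoints Λ K :=
  ⟨le_rfl, hy, fun h => (lt_irrefl _ h).elim⟩

theorem isClosed_weightedPoints {Λ K : Set V} (hΛ : IsClosed Λ) (hK : IsClosed K) :
    IsClosed (weightedPoints Λ K) := by
  refine isClosed_of_closure_subset fun p hp => ?_
  have hp₁ : 0 ≤ p.1 :=
    closure_minimal (fun q hq => hq.1) (isClosed_le continuous_const continuous_fst) hp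
  have hp₂ : p.2 ∈ K := closure_minimal (fun q hq => hq.2.1) (hK.preimage continuous_snd) hp
  refine ⟨hp₁, hp₂, fun hpos => ?_⟩
  have hpos' : p ∈ closure (weightedPoints Λ K ∩ {q | 0 < q.1}) := by
    rw [inter_comm]
    exact (isOpen_lt continuous_const continuous_fst).inter_closure ⟨hpos, hp⟩
  have hcont : ContinuousAt (fun q : ℝ × V => q.1⁻¹ • q.2) p :=
    ((continuousAt_fst.inv₀ hpos.ne').smul continuousAt_snd)
  refine hΛ.closure_subset_iff.2 ?_ (hcont.continuousWithinAt.mem_closure_image hpos')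
  rintro _ ⟨q, ⟨hq, hq₁⟩, rfl⟩
  exact hq.2.2 hq₁

theorem sum_snd_mem_convexHull_add {ι : Type*} [Fintype ι] {Λ : Set V} {K : PointedCone ℝ V}
    {p : ι → ℝ × V} (hp₁ : ∑ i, (p i).1 = 1) (hp : ∀ i, p i ∈ weightedPoints Λ K) :
    ∑ i, (p i).2 ∈ convexHull ℝ Λ + K := by
  classical
  rw [← Finset.sum_filter_add_sum_filter_not Finset.univ (fun i => 0 < (p i).1)]
  refine add_mem_add ?_ (K.sum_mem fun i _ => (hp i).2.1)
  have hweights : ∑ i ∈ Finset.univ.filter (fun i => 0 < (p i).1), (p i).1 = 1 := by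
    rw [Finset.sum_filter_of_ne fun i _ hi => (hp i).1.lt_of_ne' hi, hp₁]
  have hsmul : ∀ i ∈ Finset.univ.filter (fun i => 0 < (p i).1),
      (p i).1 • ((p i).1⁻¹ • (p i).2) = (p i).2 :=
    fun i hi => smul_inv_smul₀ (Finset.mem_filter.1 hi).2.ne' _
  rw [← Finset.sum_congr rfl hsmul]
  exact (convex_convexHull ℝ Λ).sum_mem (fun i _ => (hp i).1) hweights
    fun i hi => subset_convexHull ℝ Λ ((hp i).2.2 (Finset.mem_filter.1 hi).2)

theorem exists_fin_weightedPoints_of_mem_convexHull [FiniteDimensional ℝ V] {Λ : Set V}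
    {K : PointedCone ℝ V} (hΛK : Λ ⊆ K) {a : V} (ha : a ∈ convexHull ℝ Λ) :
    ∃ p : Fin (Module.finrank ℝ V + 1) → ℝ × V,
      ∑ i, (p i).1 = 1 ∧ (∀ i, p i ∈ weightedPoints Λ K) ∧ ∑ i, (p i).2 = a := by
  obtain ⟨ι, _, z, w, hzΛ, hz, hw, hw₁, hwz⟩ := eq_pos_convex_span_of_mem_convexHull ha
  have hcard : Fintype.card ι ≤ Module.finrank ℝ V + 1 :=
    hz.card_le_finrank_succ.trans (Nat.add_le_add_right (Submodule.finrank_le _) 1)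
  obtain ⟨e⟩ : Nonempty (ι ↪ Fin (Module.finrank ℝ V + 1)) :=
    Function.Embedding.nonempty_of_card_le (by simpa using hcard)
  set q : ι → ℝ × V := fun i => (w i, w i • z i)
  have hsum : ∑ j, Function.extend e q 0 j = ∑ i, q i :=
    (Fintype.sum_of_injective e e.injective q (Function.extend e q 0)
      (fun j hj => Function.extend_apply' q (0 : Fin _ → ℝ × V) j hj)
      (fun i => (e.injective.extend_apply _ _ _).symm)).symm
  refine ⟨Function.extend e q 0, ?_, fun j => ?_, ?_⟩
  · rw [← Prod.fst_sum, hsum, Prod.fst_sum]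
    exact hw₁
  · by_cases hj : ∃ i, e i = j
    · obtain ⟨i, rfl⟩ := hj
      rw [e.injective.extend_apply]
      exact mk_smul_mem_weightedPoints hΛK (hw i) (hzΛ ⟨i, rfl⟩)
    · rw [Function.extend_apply' _ _ _ hj]
      exact mk_zero_mem_weightedPoints K.zero_mem
  · rw [← Prod.snd_sum, hsum, Prod.snd_sum]
    exact hwz

theorem convexHull_add_eq_image [FiniteDimensional ℝ V] {Λ : Set V} {K : PointedCone ℝ V}
    (hΛK : Λ ⊆ K) :
    convexHull ℝ Λ + K = (fun p : Fin (Module.finrank ℝ V + 2) → ℝ × V => ∑ i, (p i).2) ''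
      {p | ∑ i, (p i).1 = 1 ∧ ∀ i, p i ∈ weightedPoints Λ K} := by
  refine subset_antisymm ?_ ?_
  · rintro _ ⟨a, ha, b, hb, rfl⟩
    obtain ⟨p, hp₁, hp, hpa⟩ := exists_fin_weightedPoints_of_mem_convexHull hΛK ha
    refine ⟨Fin.cons (0, b) p, ⟨?_, Fin.cases (mk_zero_mem_weightedPoints hb) hp⟩, ?_⟩
    · simpa [Fin.sum_univ_succ] using hp₁
    · simp [Fin.sum_univ_succ, hpa, add_comm]
  · rintro _ ⟨p, ⟨hp₁, hp⟩, rfl⟩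
    exact sum_snd_mem_convexHull_add hp₁ hp

theorem PointedCone.exists_pos_mul_norm_le_norm_add [FiniteDimensional ℝ V]
    {K : PointedCone ℝ V} (hK : IsClosed (K : Set V)) (hKs : (K : ConvexCone ℝ V).Salient) :
    ∃ c > 0, ∀ x ∈ K, ∀ y ∈ K, c * ‖x‖ ≤ ‖x + y‖ := by
  set S : Set (V × V) := {p | p.1 ∈ K ∧ p.2 ∈ K ∧ ‖p.1‖ + ‖p.2‖ = 1}
  have hS : IsCompact S := by
    refine isCompact_of_isClosed_isBounded ((hK.preimage continuous_fst).inter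
      ((hK.preimage continuous_snd).inter (isClosed_eq (by fun_prop) continuous_const)))
      (isBounded_closedBall (x := 0) (r := 1) |>.subset ?_)
    rintro ⟨x, y⟩ ⟨-, -, h⟩
    simp only [mem_closedBall, dist_zero_right, Prod.norm_def]
    exact max_le (by linarith [norm_nonneg y]) (by linarith [norm_nonneg x])
  have hpos : ∀ p ∈ S, 0 < ‖p.1 + p.2‖ := by
    rintro ⟨x, y⟩ ⟨hx, hy, h⟩
    refine norm_pos_iff.2 fun hxy => ?_
    have hx0 : x = 0 := by
      by_contra hx0
      exact hKs x hx hx0 (by rwa [neg_eq_of_add_eq_zero_right hxy])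
    simp_all
  obtain ⟨c, hc, hcS⟩ := hS.exists_forall_le' (by fun_prop) hpos
  refine ⟨c, hc, fun x hx y hy => ?_⟩
  suffices c * (‖x‖ + ‖y‖) ≤ ‖x + y‖ by nlinarith [norm_nonneg y]
  rcases (add_nonneg (norm_nonneg x) (norm_nonneg y)).eq_or_lt with h | h
  · rw [← h, mul_zero]
    exact norm_nonneg _
  have hr : 0 ≤ (‖x‖ + ‖y‖)⁻¹ := inv_nonneg.2 h.le
  have hmem : ((‖x‖ + ‖y‖)⁻¹ • x, (‖x‖ + ‖y‖)⁻¹ • y) ∈ S := by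
    refine ⟨K.smul_mem hr hx, K.smul_mem hr hy, ?_⟩
    rw [norm_smul, norm_smul, Real.norm_of_nonneg hr, ← mul_add, inv_mul_cancel₀ h.ne']
  have hmin := hcS _ hmem
  rw [← smul_add, norm_smul, Real.norm_of_nonneg hr, le_inv_mul_iff₀ h] at hmin
  linarith

theorem isBounded_inter_preimage_sum_snd {ι : Type*} [Fintype ι] [FiniteDimensional ℝ V]
    {K : PointedCone ℝ V} (hK : IsClosed (K : Set V)) (hKs : (K : ConvexCone ℝ V).Salient)
    (Λ : Set V) {B : Set V} (hB : IsBounded B) :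
    IsBounded ({p : ι → ℝ × V | ∑ i, (p i).1 = 1 ∧ ∀ i, p i ∈ weightedPoints Λ K} ∩
      (fun p => ∑ i, (p i).2) ⁻¹' B) := by
  classical
  obtain ⟨c, hc, hsep⟩ := K.exists_pos_mul_norm_le_norm_add hK hKs
  obtain ⟨R, hR⟩ := hB.subset_closedBall 0
  refine (IsBounded.pi fun _ => (isBounded_Icc (0 : ℝ) 1).prod
    (isBounded_closedBall (x := (0 : V)) (r := R / c))).subset ?_
  rintro p ⟨⟨hp₁, hp⟩, hpB⟩ i -
  refine ⟨⟨(hp i).1, hp₁ ▸ Finset.single_le_sum (fun j _ => (hp j).1) (Finset.mem_univ i)⟩, ?_⟩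
  have hsum := hsep _ (hp i).2.1 _ (K.sum_mem fun j (_ : j ∈ Finset.univ.erase i) => (hp j).2.1)
  rw [Finset.add_sum_erase _ (fun j => (p j).2) (Finset.mem_univ i)] at hsum
  rw [mem_closedBall_zero_iff, le_div_iff₀ hc]
  linarith [mem_closedBall_zero_iff.1 (hR hpB)]

theorem isClosed_convexHull_add [FiniteDimensional ℝ V] {K : PointedCone ℝ V}
    (hK : IsClosed (K : Set V)) (hKs : (K : ConvexCone ℝ V).Salient) {Λ : Set V}
    (hΛ : IsClosed Λ) (hΛK : Λ ⊆ K) : IsClosed (convexHull ℝ Λ + (K : Set V)) := by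
  rw [convexHull_add_eq_image hΛK]
  refine IsClosed.image_of_isBounded_inter_preimage (by fun_prop) ?_
    fun B hB => isBounded_inter_preimage_sum_snd hK hKs Λ hB
  simp only [ofPred_and, ofPred_forall]
  exact (isClosed_eq (by fun_prop) continuous_const).inter
    (isClosed_iInter fun i => (isClosed_weightedPoints hΛ hK).preimage (continuous_apply i))

theorem extremePoints_add_pointedCone_subset (A : Set V) (K : PointedCone ℝ V) :
    (A + K).extremePoints ℝ ⊆ A.extremePoints ℝ := by
  intro z hz
  obtain ⟨a, ha, b, hb, rfl⟩ := Set.mem_add.1 hz.1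
  have hA : A ⊆ A + K := fun x hx => ⟨x, hx, 0, K.zero_mem, add_zero x⟩
  have hseg : a + b ∈ openSegment ℝ a (a + (2 : ℝ) • b) :=
    ⟨1 / 2, 1 / 2, by norm_num, by norm_num, by norm_num, by module⟩
  have hab : a = a + b := hz.2 (hA ha) (add_mem_add ha (K.smul_mem zero_le_two hb)) hseg
  exact inter_extremePoints_subset_extremePoints_of_subset hA ⟨by rwa [← hab], hz⟩

theorem exists_salient_pointedCone_coe_eq_closure {C : Set V} (hCopen : IsOpen C)
    (hCconv : Convex ℝ C) (hCne : C.Nonempty)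
    (hCcone : ∀ x ∈ C, ∀ t : ℝ, 0 < t → t • x ∈ C)
    (hCnd : ∀ x v : V, v ≠ 0 → ¬ ∀ t : ℝ, x + t • v ∈ C) :
    ∃ K : PointedCone ℝ V, (K : Set V) = closure C ∧ (K : ConvexCone ℝ V).Salient := by
  let C' : ConvexCone ℝ V :=
    { carrier := C
      smul_mem' := fun t ht x hx => hCcone x hx t ht
      add_mem' := fun x hx y hy => by
        have := hCcone _ (hCconv hx hy one_half_pos.le one_half_pos.le (add_halves 1)) 2 two_pos
        rwa [smul_add, smul_smul, smul_smul, mul_one_div_cancel two_ne_zero, one_smul,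
          one_smul] at this }
  have hpointed : C'.closure.Pointed :=
    .of_nonempty_of_isClosed (hCne.mono subset_closure) isClosed_closure
  set K := C'.closure.toPointedCone hpointed
  obtain ⟨c, hc⟩ := hCne
  refine ⟨K, rfl, fun x hx hx0 hnx => hCnd c x hx0 fun t => ?_⟩
  have htx : t • x ∈ closure C := by
    rcases le_or_gt 0 t with ht | ht
    · exact K.smul_mem ht hx
    · exact neg_smul_neg t x ▸ K.smul_mem (neg_nonneg.2 ht.le) hnx
  have hCadd : C + closure C ⊆ C := by
    rw [hCopen.add_closure]
    rintro _ ⟨y, hy, z, hz, rfl⟩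
    exact C'.add_mem hy hz
  exact hCadd (add_mem_add hc htx)

end

/-- If `Λ` is a discrete subset of the closure of an open
nondegenerate convex cone `C`, then `convexHull Λ + closure C` is closed and
each of its extreme points belongs to `Λ`. -/
theorem stmt_3 {V : Type*} [NormedAddCommGroup V] [NormedSpace ℝ V]
    [FiniteDimensional ℝ V]
    (C : Set V) (hCopen : IsOpen C) (hCconv : Convex ℝ C) (hCne : C.Nonempty)
    (hCcone : ∀ x ∈ C, ∀ t : ℝ, 0 < t → t • x ∈ C)
    (hCnd : ∀ x v : V, v ≠ 0 → ¬ ∀ t : ℝ, x + t • v ∈ C)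
    (Λ : Set V) (hΛsub : Λ ⊆ closure C)
    (hΛdisc : ∀ v : V, ∃ U ∈ nhds v, (U ∩ Λ).Subsingleton) :
    IsClosed (convexHull ℝ Λ + closure C) ∧
      Set.extremePoints ℝ (convexHull ℝ Λ + closure C) ⊆ Λ := by
  obtain ⟨K, hKC, hKs⟩ :=
    exists_salient_pointedCone_coe_eq_closure hCopen hCconv hCne hCcone hCnd
  rw [← hKC] at hΛsub ⊢
  exact ⟨isClosed_convexHull_add (hKC ▸ isClosed_closure) hKs
      (isClosed_of_forall_exists_nhds_subsingleton hΛdisc) hΛsub,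
    (extremePoints_add_pointedCone_subset _ K).trans extremePoints_convexHull_subset⟩
end

section
/- Let V be a finite-dimensional real vector space with lattice L, and let Y be a nonempty convex subset of V whose affine span A equals a coset of its asymptotic space as(Y). Then the image of Y in the torus V/L is dense in the image of A in V/L. -/
/-!
If `Y` is bounded, the affine span of `Y` has trivial direction, so it is a point of `Y`.
Otherwise `Y` has a recession direction `e ≠ 0`: `y + t • e ∈ closure Y` for `y ∈ Y`, `t ≥ 0`.
Because `L` is relatively dense, some positive multiple of any vector returns close to `L`, so
the ray `ℝ≥0 • e` is dense in the line `ℝ • e` modulo `L`, whence `Y + ℝ • e ⊆ closure (Y + L)`.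
All hypotheses pass to `V ⧸ ℝ ∙ e`, which has smaller dimension, and induction gives
`affineSpan ℝ Y ⊆ closure (Y + L)`. The induction runs over relatively dense subgroups rather
than lattices, since the image of `L` in `V ⧸ ℝ ∙ e` need not be discrete.
-/

open scoped Pointwise

open Bornology Filter Metric Module Set Topology

universe u

theorem coe_affineSpan_subset_of_direction_eq_bot {k V P : Type*} [Ring k] [AddCommGroup V]
    [Module k V] [AddTorsor V P] {s : Set P} (h : (affineSpan k s).direction = ⊥) :
    (affineSpan k s : Set P) ⊆ s := by
  intro x hx
  obtain ⟨y, hy⟩ := (affineSpan_nonempty k).1 ⟨x, hx⟩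
  have hxy := AffineSubspace.vsub_mem_direction hx (subset_affineSpan k s hy)
  rw [h, Submodule.mem_bot, vsub_eq_zero_iff_eq] at hxy
  exact hxy ▸ hy

theorem direction_affineSpan_image {k V₁ V₂ : Type*} [Ring k] [AddCommGroup V₁] [Module k V₁]
    [AddCommGroup V₂] [Module k V₂] (f : V₁ →ₗ[k] V₂) (s : Set V₁) :
    (affineSpan k (f '' s)).direction = (affineSpan k s).direction.map f := by
  rw [← f.coe_toAffineMap, ← AffineSubspace.map_span, AffineSubspace.map_direction,
    f.toAffineMap_linear]

theorem add_mem_closure_add_addSubgroup {G : Type*} [AddGroup G] [TopologicalSpace G]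
    [ContinuousAdd G] {Y : Set G} {H : AddSubgroup G} {x g : G}
    (hx : x ∈ closure (Y + (H : Set G))) (hg : g ∈ H) : x + g ∈ closure (Y + (H : Set G)) :=
  map_mem_closure (f := (· + g)) (continuous_add_const g) hx <| by
    rintro _ ⟨y, hy, h, hh, rfl⟩
    exact ⟨y, hy, h + g, H.add_mem hh hg, (add_assoc y h g).symm⟩

def IsRelativelyDense {V : Type*} [SeminormedAddCommGroup V] (G : Set V) : Prop :=
  ∃ C : ℝ, ∀ x : V, ∃ g ∈ G, ‖x - g‖ ≤ C

def IsBoundedModulo {V : Type*} [SeminormedAddCommGroup V] [Module ℝ V] (Y : Set V)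
    (W : Submodule ℝ V) : Prop :=
  ∃ r : ℝ, ∀ y ∈ Y, ∃ w ∈ W, ‖y - w‖ ≤ r

theorem IsRelativelyDense.exists_pos_nsmul_norm_sub_lt {V : Type*} [NormedAddCommGroup V]
    [ProperSpace V] {G : AddSubgroup V} (hG : IsRelativelyDense (G : Set V)) (w : V) {δ : ℝ}
    (hδ : 0 < δ) :
    ∃ m : ℕ, 0 < m ∧ ∃ g ∈ G, ‖m • w - g‖ < δ := by
  obtain ⟨C, hC⟩ := hG
  choose g hgG hgC using fun n : ℕ => hC (n • w)
  obtain ⟨a, -, φ, hφ, hlim⟩ := tendsto_subseq_of_bounded (isBounded_closedBall (x := (0 : V)))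
    (fun n => mem_closedBall_zero_iff.2 (hgC n))
  obtain ⟨N, hN⟩ := Metric.cauchySeq_iff'.1 hlim.cauchySeq δ hδ
  have hφN : φ N < φ (N + 1) := hφ N.lt_succ_self
  refine ⟨φ (N + 1) - φ N, Nat.sub_pos_of_lt hφN, g (φ (N + 1)) - g (φ N),
    sub_mem (hgG _) (hgG _), ?_⟩
  convert hN (N + 1) N.le_succ using 1
  rw [dist_eq_norm, sub_nsmul _ hφN.le]
  congr 1
  simp only [Function.comp_apply]
  abel

section NormedSpace

variable {V : Type*} [NormedAddCommGroup V] [NormedSpace ℝ V]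

theorem Bornology.IsBounded.isBoundedModulo_bot {Y : Set V} (hY : IsBounded Y) :
    IsBoundedModulo Y ⊥ := by
  obtain ⟨r, hr⟩ := isBounded_iff_forall_norm_le.1 hY
  exact ⟨r, fun y hy => ⟨0, Submodule.zero_mem _, by simpa using hr y hy⟩⟩

theorem IsBoundedModulo.of_image_mkQ {Y : Set V} {U : Submodule ℝ V} {W : Submodule ℝ (V ⧸ U)}
    (h : IsBoundedModulo (U.mkQ '' Y) W) : IsBoundedModulo Y (W.comap U.mkQ) := by
  obtain ⟨r, hr⟩ := h
  refine ⟨r + 1, fun y hy => ?_⟩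
  obtain ⟨w, hw, hyw⟩ := hr _ (mem_image_of_mem _ hy)
  obtain ⟨z, hz, hz'⟩ := Submodule.Quotient.norm_mk_lt (U.mkQ y - w) one_pos
  refine ⟨y - z, ?_, by rw [sub_sub_cancel]; linarith⟩
  rwa [Submodule.mem_comap, map_sub, show U.mkQ z = U.mkQ y - w from hz, sub_sub_cancel]

theorem IsRelativelyDense.map_mkQ {G : AddSubgroup V} (hG : IsRelativelyDense (G : Set V))
    (U : Submodule ℝ V) : IsRelativelyDense (G.map U.mkQ.toAddMonoidHom : Set (V ⧸ U)) := by
  obtain ⟨C, hC⟩ := hG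
  refine ⟨C, fun x => ?_⟩
  obtain ⟨x, rfl⟩ := U.mkQ_surjective x
  obtain ⟨g, hg, hxg⟩ := hC x
  refine ⟨U.mkQ g, AddSubgroup.mem_map_of_mem _ hg, ?_⟩
  rw [← map_sub]
  exact (Submodule.Quotient.norm_mk_le _ _).trans hxg

theorem isRelativelyDense_of_span_eq_top [FiniteDimensional ℝ V] {L : AddSubgroup V}
    (hL : Submodule.span ℝ (L : Set V) = ⊤) : IsRelativelyDense (L : Set V) := by
  let b := Basis.ofSpan hL.ge
  have hbL : Submodule.span ℤ (range b) ≤ L.toIntSubmodule :=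
    Submodule.span_le.2 (Basis.ofSpan_subset hL.ge)
  refine ⟨∑ i, ‖b i‖, fun x => ⟨ZSpan.floor b x, hbL (ZSpan.floor b x).2, ?_⟩⟩
  rw [← ZSpan.fract_apply]
  exact ZSpan.norm_fract_le b x

theorem IsRelativelyDense.smul_mem_closure_image_Ici_add [FiniteDimensional ℝ V]
    {G : AddSubgroup V} (hG : IsRelativelyDense (G : Set V)) (v : V) (s : ℝ) :
    s • v ∈ closure ((· • v) '' Ici (0 : ℝ) + (G : Set V)) := by
  refine Metric.mem_closure_iff.2 fun δ hδ => ?_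
  obtain ⟨m, hm, g, hg, hmg⟩ := hG.exists_pos_nsmul_norm_sub_lt (|s| • v) hδ
  have ht : 0 ≤ s + m * |s| := by
    have : (1 : ℝ) ≤ m := by exact_mod_cast hm
    nlinarith [neg_abs_le s, abs_nonneg s]
  refine ⟨(s + m * |s|) • v + -g, add_mem_add ⟨_, ht, rfl⟩ (neg_mem hg), ?_⟩
  have : s • v - ((s + m * |s|) • v + -g) = -(m • |s| • v - g) := by
    rw [← Nat.cast_smul_eq_nsmul ℝ]
    module
  rwa [dist_eq_norm, this, norm_neg]

theorem Convex.exists_ne_zero_add_smul_mem_closure [FiniteDimensional ℝ V] {Y : Set V}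
    (hY : Convex ℝ Y) (hunb : ¬IsBounded Y) {y₀ : V} (hy₀ : y₀ ∈ Y) :
    ∃ e ≠ (0 : V), ∀ t : ℝ, 0 ≤ t → y₀ + t • e ∈ closure Y := by
  have hfar : ∀ n : ℕ, ∃ y ∈ Y, (n : ℝ) < ‖y - y₀‖ := fun n => by
    simpa [subset_def, dist_eq_norm] using mt (isBounded_closedBall.subset) hunb
  choose y hyY hy using hfar
  have hpos n : 0 < ‖y n - y₀‖ := (Nat.cast_nonneg n).trans_lt (hy n)
  obtain ⟨e, he, φ, hφ, hlim⟩ := (isCompact_sphere (0 : V) 1).tendsto_subseq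
    (x := fun n => ‖y n - y₀‖⁻¹ • (y n - y₀)) fun n => by
      simp [norm_smul, (hpos n).ne']
  refine ⟨e, ne_zero_of_mem_unit_sphere ⟨e, he⟩, fun t ht => ?_⟩
  refine mem_closure_of_tendsto ((hlim.const_smul t).const_add y₀) ?_
  have hφ' : Tendsto (fun n => ‖y (φ n) - y₀‖) atTop atTop :=
    tendsto_atTop_mono (fun n => (hy (φ n)).le)
      (tendsto_natCast_atTop_atTop.comp hφ.tendsto_atTop)
  filter_upwards [hφ'.eventually_ge_atTop t] with n hn
  have := hY.add_smul_sub_mem hy₀ (hyY (φ n))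
    ⟨div_nonneg ht (hpos _).le, div_le_one_of_le₀ hn (hpos _).le⟩
  simpa [smul_smul, div_eq_mul_inv] using this

theorem Convex.add_smul_mem_closure {Y : Set V} (hY : Convex ℝ Y) {y₀ e : V}
    (hray : ∀ t : ℝ, 0 ≤ t → y₀ + t • e ∈ closure Y) {y : V} (hy : y ∈ Y) {t : ℝ} (ht : 0 ≤ t) :
    y + t • e ∈ closure Y := by
  have hlim : Tendsto (fun r : ℝ => y + t • e + r • (y₀ - y)) (𝓝[>] 0) (𝓝 (y + t • e)) := by
    have : Continuous (fun r : ℝ => y + t • e + r • (y₀ - y)) := by fun_prop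
    simpa using (this.tendsto' 0 _ (by simp)).mono_left nhdsWithin_le_nhds
  refine closure_closure.subset (mem_closure_of_tendsto hlim ?_)
  filter_upwards [Ioc_mem_nhdsGT (zero_lt_one' ℝ)] with r ⟨hr0, hr1⟩
  have hmem := hY.closure.add_smul_sub_mem (subset_closure hy) (hray (t / r) (by positivity))
    ⟨hr0.le, hr1⟩
  convert hmem using 1
  rw [smul_sub, smul_sub, smul_add, smul_smul, mul_div_cancel₀ t hr0.ne']
  abel

theorem IsRelativelyDense.add_smul_mem_closure_add [FiniteDimensional ℝ V] {G : AddSubgroup V}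
    (hG : IsRelativelyDense (G : Set V)) {Y : Set V} {e y : V}
    (hray : ∀ t : ℝ, 0 ≤ t → y + t • e ∈ closure Y) (s : ℝ) :
    y + s • e ∈ closure (Y + (G : Set V)) := by
  refine closure_closure.subset <| map_mem_closure (f := (y + ·)) (continuous_const_add y)
    (hG.smul_mem_closure_image_Ici_add e s) ?_
  rintro _ ⟨_, ⟨t, ht, rfl⟩, g, hg, rfl⟩
  show y + (t • e + g) ∈ _
  rw [← add_assoc]
  exact add_mem_closure_add_addSubgroup
    (closure_mono (subset_add_left Y G.zero_mem) (hray t ht)) hg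

theorem mem_closure_add_of_mkQ_mem_closure {Y : Set V} {G : AddSubgroup V} {U : Submodule ℝ V}
    (hYU : ∀ y ∈ Y, ∀ u ∈ U, y + u ∈ closure (Y + (G : Set V))) {x : V}
    (hx : U.mkQ x ∈ closure (U.mkQ '' Y + U.mkQ '' G)) : x ∈ closure (Y + (G : Set V)) := by
  rw [← mem_preimage,
    U.isOpenMap_mkQ.preimage_closure_eq_closure_preimage U.continuous_mkQ] at hx
  refine closure_minimal ?_ isClosed_closure hx
  rintro v ⟨_, ⟨y, hy, rfl⟩, _, ⟨g, hg, rfl⟩, hv⟩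
  have hu : v - g - y ∈ U := by
    simp only at hv
    rw [← Submodule.Quotient.mk_eq_zero, ← U.mkQ_apply, map_sub, map_sub, ← hv]
    abel
  simpa using add_mem_closure_add_addSubgroup (hYU y hy _ hu) hg

end NormedSpace

theorem affineSpan_subset_closure_add {V : Type u} [NormedAddCommGroup V] [NormedSpace ℝ V]
    [FiniteDimensional ℝ V] {G : AddSubgroup V} (hG : IsRelativelyDense (G : Set V))
    {Y : Set V} (hY : Convex ℝ Y)
    (hYas : ∀ W : Submodule ℝ V, IsBoundedModulo Y W → (affineSpan ℝ Y).direction ≤ W) :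
    (affineSpan ℝ Y : Set V) ⊆ closure (Y + (G : Set V)) := by
  obtain ⟨n, hn⟩ : ∃ n, finrank ℝ V = n := ⟨_, rfl⟩
  induction n using Nat.strong_induction_on generalizing V with
  | _ n IH =>
  intro x hx
  by_cases hbdd : IsBounded Y
  · have hdir := le_bot_iff.1 (hYas ⊥ hbdd.isBoundedModulo_bot)
    exact subset_closure <|
      subset_add_left Y G.zero_mem (coe_affineSpan_subset_of_direction_eq_bot hdir hx)
  obtain ⟨y₀, hy₀⟩ := (affineSpan_nonempty ℝ).1 ⟨x, hx⟩
  obtain ⟨e, he, hray⟩ := hY.exists_ne_zero_add_smul_mem_closure hbdd hy₀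
  set U := ℝ ∙ e
  have hline : ∀ y ∈ Y, ∀ u ∈ U, y + u ∈ closure (Y + (G : Set V)) := by
    rintro y hy u hu
    obtain ⟨s, rfl⟩ := Submodule.mem_span_singleton.1 hu
    exact hG.add_smul_mem_closure_add (fun t ht => hY.add_smul_mem_closure hray hy ht) s
  have : IsClosed (U : Set V) := U.closed_of_finiteDimensional
  have hrank : finrank ℝ (V ⧸ U) < n := by
    have := U.finrank_quotient_add_finrank
    rw [finrank_span_singleton he] at this
    omega
  refine mem_closure_add_of_mkQ_mem_closure hline ?_
  have hπx : U.mkQ x ∈ affineSpan ℝ (U.mkQ '' Y) := by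
    rw [← U.mkQ.coe_toAffineMap, ← AffineSubspace.map_span]
    exact AffineSubspace.mem_map.2 ⟨x, hx, rfl⟩
  have hYas' (W : Submodule ℝ (V ⧸ U)) (hW : IsBoundedModulo (U.mkQ '' Y) W) :
      (affineSpan ℝ (U.mkQ '' Y)).direction ≤ W := by
    rw [direction_affineSpan_image, Submodule.map_le_iff_le_comap]
    exact hYas _ hW.of_image_mkQ
  exact IH _ hrank (hG.map_mkQ U) (hY.linear_image U.mkQ) hYas' rfl hπx

theorem stmt_5_general {V : Type*} [NormedAddCommGroup V] [NormedSpace ℝ V]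
    [FiniteDimensional ℝ V]
    (L : AddSubgroup V)
    (hLspan : Submodule.span ℝ (L : Set V) = ⊤)
    (Y : Set V) (hYconv : Convex ℝ Y)
    (W : Submodule ℝ V)
    (hWmin : ∀ W' : Submodule ℝ V, (∃ r : ℝ, ∀ y ∈ Y, ∃ w ∈ W', ‖y - w‖ ≤ r) → W ≤ W')
    (hcoset : ∃ a : V, (affineSpan ℝ Y : Set V) = a +ᵥ (W : Set V)) :
    (QuotientAddGroup.mk (s := L)) '' (affineSpan ℝ Y : Set V) ⊆
      closure ((QuotientAddGroup.mk (s := L)) '' Y) := by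
  obtain ⟨a, ha⟩ := hcoset
  have hdir : (affineSpan ℝ Y).direction ≤ W := by
    rw [AffineSubspace.direction_eq_vectorSpan, ha, vectorSpan_vadd, vectorSpan_def,
      Submodule.span_le]
    rintro _ ⟨p, hp, q, hq, rfl⟩
    exact W.sub_mem hp hq
  have hdense := affineSpan_subset_closure_add (isRelativelyDense_of_span_eq_top hLspan) hYconv
    fun W' hW' => hdir.trans (hWmin W' hW')
  have hmk : QuotientAddGroup.mk (s := L) '' (Y + (L : Set V)) ⊆ QuotientAddGroup.mk '' Y := by
    rintro _ ⟨_, ⟨y, hy, ℓ, hℓ, rfl⟩, rfl⟩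
    exact ⟨y, hy, (QuotientAddGroup.mk_add_of_mem y hℓ).symm⟩
  calc QuotientAddGroup.mk '' (affineSpan ℝ Y : Set V)
      ⊆ QuotientAddGroup.mk '' closure (Y + (L : Set V)) := image_mono hdense
    _ ⊆ closure (QuotientAddGroup.mk '' (Y + (L : Set V))) :=
      image_closure_subset_closure_image QuotientAddGroup.continuous_mk
    _ ⊆ closure (QuotientAddGroup.mk '' Y) := closure_mono hmk

/-- Let `L` be a lattice in `V` and `Y` a nonempty convex set whose
affine span is a coset of its asymptotic space `W = as(Y)` (the smallest linear
subspace modulo which `Y` is bounded). Then the image of `Y` in `V ⧸ L` is dense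
in the image of the affine span of `Y`. -/
theorem stmt_5 {V : Type*} [NormedAddCommGroup V] [NormedSpace ℝ V]
    [FiniteDimensional ℝ V]
    (L : AddSubgroup V) (hLdisc : DiscreteTopology L)
    (hLspan : Submodule.span ℝ (L : Set V) = ⊤)
    (Y : Set V) (hYne : Y.Nonempty) (hYconv : Convex ℝ Y)
    (W : Submodule ℝ V)
    (hWbdd : ∃ r : ℝ, ∀ y ∈ Y, ∃ w ∈ W, ‖y - w‖ ≤ r)
    (hWmin : ∀ W' : Submodule ℝ V, (∃ r : ℝ, ∀ y ∈ Y, ∃ w ∈ W', ‖y - w‖ ≤ r) → W ≤ W')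
    (hcoset : ∃ a : V, (affineSpan ℝ Y : Set V) = a +ᵥ (W : Set V)) :
    (QuotientAddGroup.mk (s := L)) '' (affineSpan ℝ Y : Set V) ⊆
      closure ((QuotientAddGroup.mk (s := L)) '' Y) :=
  stmt_5_general L hLspan Y hYconv W hWmin hcoset
end

section
/- Let V be a finite-dimensional real vector space, L ⊆ V a lattice, and C an open nondegenerate convex cone. Then [C ∩ L] + closure(C) = [C ∩ L]; that is, the convex hull of the lattice points in C is stable under addition of elements of the closed cone. -/
/-!
It suffices to show `x + w ∈ [C ∩ L]` for a lattice point `x ∈ C` and `w ∈ closure C`. After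
translating by `-x`, `U = C - x` is a neighbourhood of `0` having `w` as a recession direction.
A pigeonhole argument gives lattice points `g k ∈ U` with `g k - q k • w → 0` and `q k → ∞`.
If `w ∉ [U ∩ L]`, a functional `T` separating `w` from `U ∩ L` without being constant on `U ∩ L`
is forced to vanish at `w` and at every `g k`, so `w` already lies in the span of the subgroup
`L ∩ ker T`, whose span is strictly smaller; induction on the dimension of that span concludes.
-/

open scoped Pointwise
open Filter Topology Set

def Set.recessionCone {E : Type*} [AddCommGroup E] [Module ℝ E] (U : Set E) : Set E :=
  {c | ∀ u ∈ U, ∀ t : ℝ, 0 ≤ t → u + t • c ∈ U}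

section

variable {V : Type*} [NormedAddCommGroup V] [NormedSpace ℝ V]

theorem closure_subset_recessionCone {C : Set V} (hCopen : IsOpen C) (hCconv : Convex ℝ C)
    (hCcone : ∀ x ∈ C, ∀ t : ℝ, 0 < t → t • x ∈ C) : closure C ⊆ C.recessionCone := by
  intro w hw z hz t ht
  have hcombo := hCconv.combo_interior_closure_mem_interior (hCopen.interior_eq.symm ▸ hz) hw
    (a := 1 / (1 + t)) (b := t / (1 + t)) (by positivity) (by positivity) (by field_simp)
  rw [hCopen.interior_eq] at hcombo
  convert hCcone _ hcombo (1 + t) (by positivity) using 1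
  rw [smul_add, smul_smul, smul_smul, mul_one_div_cancel (by positivity),
    mul_div_cancel₀ _ (by positivity), one_smul]

theorem zero_mem_closure_of_smul_mem {C : Set V} (hCcone : ∀ x ∈ C, ∀ t : ℝ, 0 < t → t • x ∈ C)
    {x : V} (hx : x ∈ C) : (0 : V) ∈ closure C := by
  refine mem_closure_of_tendsto (f := fun t : ℝ ↦ t • x) (b := 𝓝[>] 0) ?_
    (eventually_nhdsWithin_of_forall fun t ht ↦ hCcone x hx t ht)
  simpa using (tendsto_nhdsWithin_of_tendsto_nhds (tendsto_id (x := 𝓝 (0 : ℝ)))).smul_const x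

theorem tendsto_inv_smul_of_tendsto_sub_natCast_smul {c : V} {q : ℕ → ℕ} {g : ℕ → V}
    (hq : Tendsto q atTop atTop) (hg : Tendsto (fun k ↦ g k - (q k : ℝ) • c) atTop (𝓝 0)) :
    Tendsto (fun k ↦ (q k : ℝ)⁻¹ • g k) atTop (𝓝 c) := by
  have hinv : Tendsto (fun k ↦ (q k : ℝ)⁻¹) atTop (𝓝 0) :=
    tendsto_inv_atTop_zero.comp (tendsto_natCast_atTop_atTop.comp hq)
  have hlim := (hinv.smul hg).add_const c
  rw [zero_smul, zero_add] at hlim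
  refine hlim.congr' ?_
  filter_upwards [hq.eventually_ne_atTop 0] with k hk
  rw [smul_sub, smul_smul, inv_mul_cancel₀ (Nat.cast_ne_zero.mpr hk), one_smul, sub_add_cancel]

variable [FiniteDimensional ℝ V]

theorem AddSubgroup.exists_norm_sub_le_of_mem_span (Λ : AddSubgroup V) :
    ∃ R : ℝ, ∀ x ∈ Submodule.span ℝ (Λ : Set V), ∃ g ∈ Λ, ‖x - g‖ ≤ R := by
  obtain ⟨b, hbΛ, hbspan, hbli⟩ := exists_linearIndependent ℝ (Λ : Set V)
  lift b to Finset V using hbli.setFinite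
  refine ⟨∑ v ∈ b, ‖v‖, fun x hx ↦ ?_⟩
  rw [← hbspan] at hx
  obtain ⟨f, -, rfl⟩ := Submodule.mem_span_finset.mp hx
  refine ⟨∑ v ∈ b, ⌊f v⌋ • v, sum_mem fun v hv ↦ zsmul_mem (hbΛ hv) _, ?_⟩
  calc ‖∑ v ∈ b, f v • v - ∑ v ∈ b, ⌊f v⌋ • v‖ = ‖∑ v ∈ b, Int.fract (f v) • v‖ := by
        simp only [← Finset.sum_sub_distrib, Int.fract, sub_smul, Int.cast_smul_eq_zsmul]
    _ ≤ ∑ v ∈ b, ‖Int.fract (f v) • v‖ := norm_sum_le _ _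
    _ ≤ ∑ v ∈ b, ‖v‖ := Finset.sum_le_sum fun v _ ↦ by
        rw [norm_smul, Real.norm_of_nonneg (Int.fract_nonneg _)]
        exact mul_le_of_le_one_left (norm_nonneg v) (Int.fract_lt_one _).le

theorem AddSubgroup.frequently_exists_norm_sub_natCast_smul_lt (Λ : AddSubgroup V) {c : V}
    (hc : c ∈ Submodule.span ℝ (Λ : Set V)) {δ : ℝ} (hδ : 0 < δ) :
    ∃ᶠ q : ℕ in atTop, ∃ g ∈ Λ, ‖g - (q : ℝ) • c‖ < δ := by
  obtain ⟨R, hR⟩ := Λ.exists_norm_sub_le_of_mem_span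
  -- `m • c` stays within `R` of `Λ`; two close terms of a convergent subsequence of the
  -- offsets give the multiple `(φ n - φ J) • c` close to `Λ`.
  choose g hgΛ hgR using fun m : ℕ ↦ hR _ (Submodule.smul_mem _ (m : ℝ) hc)
  obtain ⟨a, -, φ, hφ, hlim⟩ := tendsto_subseq_of_bounded (x := fun m : ℕ ↦ (m : ℝ) • c - g m)
    (Metric.isBounded_closedBall (x := 0) (r := R)) fun m ↦ by simpa using hgR m
  obtain ⟨J, hJ⟩ := Metric.cauchySeq_iff.mp hlim.cauchySeq δ hδ
  refine frequently_atTop.mpr fun N ↦ ?_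
  obtain ⟨n, hnN, hnJ⟩ :=
    ((hφ.tendsto_atTop.eventually_ge_atTop (φ J + N)).and (eventually_ge_atTop J)).exists
  refine ⟨φ n - φ J, by omega, g (φ n) - g (φ J), sub_mem (hgΛ _) (hgΛ _), ?_⟩
  have hdiff : g (φ n) - g (φ J) - ((φ n - φ J : ℕ) : ℝ) • c =
      ((φ J : ℝ) • c - g (φ J)) - ((φ n : ℝ) • c - g (φ n)) := by
    rw [Nat.cast_sub (by omega), sub_smul]
    abel
  simpa only [hdiff, dist_eq_norm, Function.comp_apply] using hJ J le_rfl n hnJ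

theorem AddSubgroup.exists_seq_tendsto_sub_natCast_smul (Λ : AddSubgroup V) {c : V}
    (hc : c ∈ Submodule.span ℝ (Λ : Set V)) {δ : ℝ} (hδ : 0 < δ) :
    ∃ (q : ℕ → ℕ) (g : ℕ → V), StrictMono q ∧ (∀ k, g k ∈ Λ) ∧
      (∀ k, ‖g k - (q k : ℝ) • c‖ < δ) ∧ Tendsto (fun k ↦ g k - (q k : ℝ) • c) atTop (𝓝 0) := by
  obtain ⟨q, hq, hqg⟩ := extraction_forall_of_frequently fun k : ℕ ↦
    Λ.frequently_exists_norm_sub_natCast_smul_lt hc (δ := δ / (k + 1)) (by positivity)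
  choose g hgΛ hg using hqg
  have hδk (k : ℕ) : δ / (k + 1) ≤ δ := div_le_self hδ.le (by linarith [k.cast_nonneg (α := ℝ)])
  refine ⟨q, g, hq, hgΛ, fun k ↦ (hg k).trans_le (hδk k), ?_⟩
  refine squeeze_zero_norm (fun k ↦ (hg k).le) ?_
  simpa [Function.comp_def] using
    (tendsto_const_div_atTop_nhds_zero_nat δ).comp (tendsto_add_atTop_nat 1)

theorem exists_forall_le_and_exists_lt_of_notMem_convexHull {S : Set V} {c : V} (h0 : 0 ∈ S)
    (hcS : c ∈ Submodule.span ℝ S) (hc : c ∉ convexHull ℝ S) :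
    ∃ T : V →L[ℝ] ℝ, (∀ y ∈ S, T c ≤ T y) ∧ ∃ y ∈ S, T c < T y := by
  set W := Submodule.span ℝ S
  set S' : Set W := (↑) ⁻¹' S with hS'
  have himage : W.subtype '' convexHull ℝ S' = convexHull ℝ S := by
    rw [W.subtype.image_convexHull, Submodule.coe_subtype, hS',
      image_preimage_eq_of_subset fun x hx ↦ ⟨⟨x, Submodule.subset_span hx⟩, rfl⟩]
  have hint : (interior (convexHull ℝ S')).Nonempty := by
    rw [interior_convexHull_nonempty_iff_affineSpan_eq_top, ← AffineSubspace.coe_eq_univ_iff,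
      ← insert_eq_of_mem (show (0 : W) ∈ S' from h0), affineSpan_insert_zero,
      Submodule.span_span_coe_preimage, Submodule.top_coe]
  have hc' : (⟨c, hcS⟩ : W) ∉ interior (convexHull ℝ S') := fun h ↦
    hc (himage ▸ mem_image_of_mem _ (interior_subset h))
  obtain ⟨F, hF⟩ := geometric_hahn_banach_open_point (convex_convexHull ℝ S').interior
    isOpen_interior hc'
  have hle : convexHull ℝ S' ⊆ {y | F y ≤ F ⟨c, hcS⟩} := by
    refine subset_closure.trans ?_
    rw [← (convex_convexHull ℝ S').closure_interior_eq_closure_of_nonempty_interior hint]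
    exact closure_minimal (fun y hy ↦ (hF y hy).le) (isClosed_le F.continuous continuous_const)
  obtain ⟨d, hd⟩ := hint
  have hlt : ∃ y ∈ S', F y < F ⟨c, hcS⟩ := by
    by_contra! hge
    exact (hF d hd).not_ge (convexHull_min hge (convex_halfSpace_ge F.isLinear _)
      (interior_subset hd))
  obtain ⟨G, hG, -⟩ := exists_extension_norm_eq W F
  refine ⟨-G, fun y hy ↦ ?_, ?_⟩
  · have hy' : (⟨y, Submodule.subset_span hy⟩ : W) ∈ S' := hy
    simp only [neg_apply, neg_le_neg_iff]
    exact (hG _).trans_le ((hle (subset_convexHull ℝ S' hy')).trans_eq (hG _).symm)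
  · obtain ⟨y, hy, hFy⟩ := hlt
    refine ⟨y, hy, ?_⟩
    simp only [neg_apply, neg_lt_neg_iff]
    exact (hG y).trans_lt (hFy.trans_eq (hG ⟨c, hcS⟩).symm)

theorem exists_seq_mem_inter_of_mem_recessionCone (Λ : AddSubgroup V) {U : Set V} {c : V}
    (hU : U ∈ 𝓝 0) (hcU : c ∈ U.recessionCone) (hcΛ : c ∈ Submodule.span ℝ (Λ : Set V)) :
    ∃ (q : ℕ → ℕ) (g : ℕ → V), StrictMono q ∧ (∀ k, g k ∈ U ∩ Λ) ∧
      (∀ k, g (k + 1) - g k ∈ U ∩ Λ) ∧ Tendsto (fun k ↦ g k - (q k : ℝ) • c) atTop (𝓝 0) := by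
  obtain ⟨ε, hε, hball⟩ := Metric.mem_nhds_iff.mp hU
  obtain ⟨q, g, hq, hgΛ, hgε, hlim⟩ := Λ.exists_seq_tendsto_sub_natCast_smul hcΛ (half_pos hε)
  have hmem (v : V) (t : ℝ) (ht : 0 ≤ t) (hv : ‖v - t • c‖ < ε) : v ∈ U := by
    simpa using hcU _ (hball (mem_ball_zero_iff.mpr hv)) t ht
  refine ⟨q, g, hq, fun k ↦ ⟨hmem _ _ (Nat.cast_nonneg _) ((hgε k).trans (half_lt_self hε)),
    hgΛ k⟩, fun k ↦ ⟨hmem _ ((q (k + 1) : ℝ) - q k) ?_ ?_, sub_mem (hgΛ _) (hgΛ _)⟩, hlim⟩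
  · exact sub_nonneg.mpr (Nat.cast_le.mpr (hq k.lt_succ_self).le)
  · calc ‖g (k + 1) - g k - ((q (k + 1) : ℝ) - q k) • c‖
        = ‖(g (k + 1) - (q (k + 1) : ℝ) • c) - (g k - (q k : ℝ) • c)‖ := by
          rw [sub_smul]; congr 1; abel
      _ ≤ ‖g (k + 1) - (q (k + 1) : ℝ) • c‖ + ‖g k - (q k : ℝ) • c‖ := norm_sub_le _ _
      _ < ε / 2 + ε / 2 := add_lt_add (hgε _) (hgε _)
      _ = ε := add_halves ε

theorem exists_span_lt_of_notMem_convexHull_inter (Λ : AddSubgroup V) {U : Set V} {c : V}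
    (hU : U ∈ 𝓝 0) (hcU : c ∈ U.recessionCone) (hcΛ : c ∈ Submodule.span ℝ (Λ : Set V))
    (hc : c ∉ convexHull ℝ (U ∩ Λ)) :
    ∃ Λ' ≤ Λ, Submodule.span ℝ (Λ' : Set V) < Submodule.span ℝ Λ ∧
      c ∈ Submodule.span ℝ (Λ' : Set V) := by
  obtain ⟨q, g, hq, hg, hgsucc, hlim⟩ := exists_seq_mem_inter_of_mem_recessionCone Λ hU hcU hcΛ
  have hnorm := tendsto_inv_smul_of_tendsto_sub_natCast_smul hq.tendsto_atTop hlim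
  have hmem_span (W : Submodule ℝ V) (hgW : ∀ k, g k ∈ W) : c ∈ W :=
    W.closed_of_finiteDimensional.mem_of_tendsto hnorm
      (Eventually.of_forall fun k ↦ W.smul_mem _ (hgW k))
  have h0 : (0 : V) ∈ U ∩ Λ := ⟨mem_of_mem_nhds hU, zero_mem Λ⟩
  obtain ⟨T, hT, y, hy, hTy⟩ := exists_forall_le_and_exists_lt_of_notMem_convexHull h0
    (hmem_span _ fun k ↦ Submodule.subset_span (hg k)) hc
  have hTc : T c = 0 := by
    refine le_antisymm (by simpa using hT 0 h0) (le_of_tendsto_of_tendsto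
      (f := fun k ↦ (q k : ℝ)⁻¹ * T c) ?_
      ((T.continuous.tendsto c).comp hnorm) (Eventually.of_forall fun k ↦ ?_))
    · simpa using (tendsto_inv_atTop_zero.comp
        (tendsto_natCast_atTop_atTop.comp hq.tendsto_atTop)).mul_const (T c)
    · simpa only [Function.comp_apply, map_smul, smul_eq_mul] using
        mul_le_mul_of_nonneg_left (hT _ (hg k)) (inv_nonneg.mpr (q k).cast_nonneg)
  -- `T ∘ g` is monotone because `T ≥ T c = 0` on the differences `g (k + 1) - g k ∈ U ∩ Λ`.
  have hTg : ∀ k, T (g k) = 0 := by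
    have hmono : Monotone (fun k ↦ T (g k)) := monotone_nat_of_le_succ fun k ↦ by
      simpa [hTc] using hT _ (hgsucc k)
    have hlimT : Tendsto (fun k ↦ T (g k)) atTop (𝓝 0) := by
      simpa [Function.comp_def, hTc] using (T.continuous.tendsto 0).comp hlim
    exact fun k ↦ le_antisymm (hmono.ge_of_tendsto hlimT k) (hTc ▸ hT _ (hg k))
  set Λ' := Λ ⊓ (LinearMap.ker (T : V →ₗ[ℝ] ℝ)).toAddSubgroup
  have hker : Submodule.span ℝ (Λ' : Set V) ≤ LinearMap.ker (T : V →ₗ[ℝ] ℝ) :=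
    Submodule.span_le.mpr fun v hv ↦ hv.2
  refine ⟨Λ', inf_le_left, (Submodule.span_mono inf_le_left).lt_of_ne fun heq ↦ ?_,
    hmem_span _ fun k ↦ Submodule.subset_span ⟨(hg k).2, hTg k⟩⟩
  have hTy0 : T y = 0 := hker (heq ▸ Submodule.subset_span hy.2)
  linarith

theorem mem_convexHull_inter_of_mem_recessionCone (Λ : AddSubgroup V) {U : Set V} {c : V}
    (hU : U ∈ 𝓝 0) (hcU : c ∈ U.recessionCone) (hcΛ : c ∈ Submodule.span ℝ (Λ : Set V)) :
    c ∈ convexHull ℝ (U ∩ Λ) := by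
  induction hn : Module.finrank ℝ (Submodule.span ℝ (Λ : Set V)) using Nat.strong_induction_on
    generalizing Λ with
  | _ n ih =>
    by_contra hc
    obtain ⟨Λ', hΛ', hlt, hcΛ'⟩ := exists_span_lt_of_notMem_convexHull_inter Λ hU hcU hcΛ hc
    exact hc (convexHull_mono (inter_subset_inter_right U hΛ')
      (ih _ (hn ▸ Submodule.finrank_lt_finrank_of_lt hlt) Λ' hcΛ' rfl))

theorem add_mem_convexHull_inter_of_mem_recessionCone (Λ : AddSubgroup V) {U : Set V} {x c : V}
    (hxΛ : x ∈ Λ) (hU : U ∈ 𝓝 x) (hcU : c ∈ U.recessionCone)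
    (hcΛ : c ∈ Submodule.span ℝ (Λ : Set V)) :
    x + c ∈ convexHull ℝ (U ∩ Λ) := by
  have h := vadd_mem_vadd_set (a := x) <|
    mem_convexHull_inter_of_mem_recessionCone Λ (U := -x +ᵥ U) ?_ ?_ hcΛ
  · rwa [← convexHull_vadd, vadd_set_inter, vadd_neg_vadd, vadd_coe_set hxΛ] at h
  · simpa using (vadd_mem_nhds_vadd_iff (-x)).mpr hU
  · rintro _ ⟨u, hu, rfl⟩ t ht
    exact ⟨u + t • c, hcU u hu t ht, by simp only [vadd_eq_add, add_assoc]⟩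

end

theorem stmt_7_general {V : Type*} [NormedAddCommGroup V] [NormedSpace ℝ V]
    [FiniteDimensional ℝ V]
    (L : AddSubgroup V)
    (hLspan : Submodule.span ℝ (L : Set V) = ⊤)
    (C : Set V) (hCopen : IsOpen C) (hCconv : Convex ℝ C)
    (hCcone : ∀ x ∈ C, ∀ t : ℝ, 0 < t → t • x ∈ C) :
    convexHull ℝ (C ∩ (L : Set V)) + closure C = convexHull ℝ (C ∩ (L : Set V)) := by
  refine (add_subset_iff.mpr fun p hp w hw ↦ ?_).antisymm fun p hp ↦ ?_
  · have hsub : C ∩ L ⊆ (· + w) ⁻¹' convexHull ℝ (C ∩ L) := fun x hx ↦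
      add_mem_convexHull_inter_of_mem_recessionCone L hx.2 (hCopen.mem_nhds hx.1)
        (closure_subset_recessionCone hCopen hCconv hCcone hw) (hLspan ▸ Submodule.mem_top)
    exact convexHull_min hsub ((convex_convexHull ℝ _).translate_preimage_left w) hp
  · obtain ⟨x, hx⟩ := convexHull_nonempty_iff.mp ⟨p, hp⟩
    exact ⟨p, hp, 0, zero_mem_closure_of_smul_mem hCcone hx.1, add_zero p⟩

/-- For a lattice `L` and an open nondegenerate convex cone `C`,
the convex hull of the lattice points of `C` is stable under addition of the
closed cone: `[C ∩ L] + closure C = [C ∩ L]`. -/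
theorem stmt_7 {V : Type*} [NormedAddCommGroup V] [NormedSpace ℝ V]
    [FiniteDimensional ℝ V]
    (L : AddSubgroup V) (hLdisc : DiscreteTopology L)
    (hLspan : Submodule.span ℝ (L : Set V) = ⊤)
    (C : Set V) (hCopen : IsOpen C) (hCconv : Convex ℝ C) (hCne : C.Nonempty)
    (hCcone : ∀ x ∈ C, ∀ t : ℝ, 0 < t → t • x ∈ C)
    (hCnd : ∀ x v : V, v ≠ 0 → ¬ ∀ t : ℝ, x + t • v ∈ C) :
    convexHull ℝ (C ∩ (L : Set V)) + closure C = convexHull ℝ (C ∩ (L : Set V)) :=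
  stmt_7_general L hLspan C hCopen hCconv hCcone
end

section
/- Let V be a finite-dimensional real vector space with lattice L and open nondegenerate convex cone C. Let p ∈ C_+ := convex hull of (closure(C) ∩ ℚL) (the rational points of the closed cone). Then the set {ξ(p) : ξ ∈ C° ∩ L*} is a discrete subset of ℝ_{≥0}; in particular the function ξ ↦ ξ(p) attains a minimum on C° ∩ L*. -/
/-!
Write `p = ∑ wᵢ zᵢ` as a convex combination of points `zᵢ = qᵢ lᵢ ∈ closure C` with `lᵢ ∈ L`.
For `ξ ∈ C° ∩ L*` every term `wᵢ ⟪ξ, zᵢ⟫` is a nonnegative element of the discrete group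
`(wᵢ qᵢ) ℤ`, so only finitely many values `⟪ξ, p⟫` lie below any bound; discreteness and the
minimum follow once `C° ∩ L*` is nonempty. Since `C` contains no line, the bipolar theorem shows
that the dual cone of `closure C` has nonempty interior `C°`, and an open cone meets every
relatively dense set, in particular the dual lattice `L*`.
-/

open scoped RealInnerProductSpace

open Set
open scoped Pointwise

theorem finite_zmultiples_inter_Icc (c a b : ℝ) :
    ((AddSubgroup.zmultiples c : Set ℝ) ∩ Icc a b).Finite :=
  inter_comm (Icc a b) _ ▸ Metric.finite_isBounded_inter_isClosed
    (SetLike.isDiscrete_iff_discreteTopology.2 inferInstance) (Metric.isBounded_Icc a b)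
    AddSubgroup.isClosed_of_discrete

theorem finite_image_sum_inter_Iic {ι : Type*} [Fintype ι] {A : ι → Set ℝ}
    (hA₀ : ∀ i, A i ⊆ Ici 0) (hA : ∀ i M, (A i ∩ Iic M).Finite) (M : ℝ) :
    ((fun a : ι → ℝ ↦ ∑ i, a i) '' univ.pi A ∩ Iic M).Finite := by
  refine ((Finite.pi fun i ↦ hA i M).image fun a ↦ ∑ i, a i).subset ?_
  rintro _ ⟨⟨a, ha, rfl⟩, hM⟩
  refine ⟨a, fun i _ ↦ ⟨ha i trivial, ?_⟩, rfl⟩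
  exact (Finset.single_le_sum (fun j _ ↦ hA₀ j (ha j trivial)) (Finset.mem_univ i)).trans
    (mem_Iic.1 hM)

theorem exists_pos_forall_eq_of_finite_inter_Iic {T : Set ℝ} (hT : ∀ M, (T ∩ Iic M).Finite)
    (r : ℝ) : ∃ ε > 0, ∀ r' ∈ T, |r' - r| < ε → r' = r := by
  have hU : IsOpen (((T ∩ Iic (r + 1)) \ {r})ᶜ ∩ Iio (r + 1)) :=
    (hT _).sdiff.isClosed.isOpen_compl.inter isOpen_Iio
  obtain ⟨ε, hε, hball⟩ := Metric.isOpen_iff.1 hU r ⟨by simp, lt_add_one r⟩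
  refine ⟨ε, hε, fun r' hr' hr'r ↦ by_contra fun hne ↦ ?_⟩
  obtain ⟨hnot, hlt⟩ := hball (by rwa [Metric.mem_ball, Real.dist_eq])
  exact hnot ⟨⟨hr', mem_Iic.2 hlt.le⟩, hne⟩

theorem exists_forall_le_of_finite_image_inter_Iic {α : Type*} {X : Set α} {f : α → ℝ}
    (hX : X.Nonempty) (hf : ∀ M, (f '' X ∩ Iic M).Finite) : ∃ x ∈ X, ∀ y ∈ X, f x ≤ f y := by
  obtain ⟨x₁, hx₁⟩ := hX
  obtain ⟨_, ⟨⟨x, hx, rfl⟩, hxx₁⟩, hmin⟩ :=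
    exists_min_image (f '' X ∩ Iic (f x₁)) id (hf (f x₁))
      ⟨f x₁, mem_image_of_mem f hx₁, mem_Iic.2 le_rfl⟩
  refine ⟨x, hx, fun y hy ↦ ?_⟩
  rcases le_total (f y) (f x₁) with hy₁ | hy₁
  · exact hmin _ ⟨mem_image_of_mem f hy, hy₁⟩
  · exact hxx₁.trans hy₁

section Cones

variable {E : Type*} [NormedAddCommGroup E] [NormedSpace ℝ E] {C : Set E}

theorem add_mem_of_half_smul_add_mem (hcone : ∀ x ∈ C, ∀ t : ℝ, 0 < t → t • x ∈ C) {x y : E}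
    (h : (1 / 2 : ℝ) • x + (1 / 2 : ℝ) • y ∈ C) : x + y ∈ C := by
  simpa [smul_add, smul_smul] using hcone _ h 2 two_pos

theorem smul_mem_closure_of_smul_mem (hcone : ∀ x ∈ C, ∀ t : ℝ, 0 < t → t • x ∈ C) :
    ∀ x ∈ closure C, ∀ t : ℝ, 0 < t → t • x ∈ closure C :=
  fun _ hx t ht ↦
    MapsTo.closure (f := (t • ·)) (fun y hy ↦ hcone y hy t ht) (continuous_const_smul t) hx

theorem zero_mem_closure_of_smul_mem_s9 (hne : C.Nonempty)
    (hcone : ∀ x ∈ C, ∀ t : ℝ, 0 < t → t • x ∈ C) : (0 : E) ∈ closure C := by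
  obtain ⟨x, hx⟩ := hne
  have hlim : Filter.Tendsto (fun t : ℝ ↦ t • x) (nhdsWithin 0 (Ioi 0)) (nhds 0) := by
    simpa using (Filter.tendsto_id.mono_left (nhdsWithin_le_nhds (a := (0 : ℝ)))).smul_const x
  exact mem_closure_of_tendsto hlim (eventually_mem_nhdsWithin.mono fun t ht ↦ hcone x hx t ht)

theorem exists_properCone_coe_eq_closure (hconv : Convex ℝ C) (hne : C.Nonempty)
    (hcone : ∀ x ∈ C, ∀ t : ℝ, 0 < t → t • x ∈ C) :
    ∃ K : ProperCone ℝ E, (K : Set E) = closure C := by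
  have hcone' := smul_mem_closure_of_smul_mem hcone
  refine ⟨{ carrier := closure C
            add_mem' := fun hx hy ↦ add_mem_of_half_smul_add_mem hcone'
              (hconv.closure hx hy (by norm_num) (by norm_num) (by norm_num))
            zero_mem' := zero_mem_closure_of_smul_mem_s9 hne hcone
            smul_mem' := fun ⟨c, hc⟩ x hx ↦ ?_
            isClosed' := isClosed_closure }, rfl⟩
  rcases hc.eq_or_lt with rfl | hc
  · simpa using zero_mem_closure_of_smul_mem_s9 hne hcone
  · exact hcone' x hx c hc

theorem add_mem_of_mem_of_mem_closure (hopen : IsOpen C) (hconv : Convex ℝ C)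
    (hcone : ∀ x ∈ C, ∀ t : ℝ, 0 < t → t • x ∈ C) {x y : E} (hx : x ∈ C) (hy : y ∈ closure C) :
    x + y ∈ C := by
  refine add_mem_of_half_smul_add_mem hcone ?_
  rw [← hopen.interior_eq] at hx ⊢
  exact hconv.combo_interior_closure_mem_interior hx hy (by norm_num) (by norm_num) (by norm_num)

theorem smul_mem_interior_of_smul_mem (hcone : ∀ x ∈ C, ∀ t : ℝ, 0 < t → t • x ∈ C) :
    ∀ x ∈ interior C, ∀ t : ℝ, 0 < t → t • x ∈ interior C := by
  intro x hx t ht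
  have : t • x ∈ interior (t • C) := interior_smul₀ ht.ne' C ▸ smul_mem_smul_set hx
  exact interior_mono (by rintro _ ⟨y, hy, rfl⟩; exact hcone y hy t ht) this

theorem exists_mem_inter_of_isOpen_of_smul_mem {U S : Set E} (hU : IsOpen U) (hne : U.Nonempty)
    (hcone : ∀ x ∈ U, ∀ t : ℝ, 0 < t → t • x ∈ U) {R : ℝ} (hS : ∀ x, ∃ s ∈ S, ‖x - s‖ ≤ R) :
    (U ∩ S).Nonempty := by
  obtain ⟨x, hx⟩ := hne
  obtain ⟨ε, hε, hball⟩ := Metric.isOpen_iff.1 hU x hx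
  set t := (|R| + 1) / ε
  have ht : 0 < t := by positivity
  obtain ⟨s, hs, hsR⟩ := hS (t • x)
  have hscale : t⁻¹ • s - x = t⁻¹ • (s - t • x) := by rw [smul_sub, inv_smul_smul₀ ht.ne']
  have hdist : dist (t⁻¹ • s) x < ε := by
    calc dist (t⁻¹ • s) x = t⁻¹ * ‖t • x - s‖ := by
          rw [dist_eq_norm, hscale, norm_smul, norm_inv, Real.norm_of_nonneg ht.le, norm_sub_rev]
      _ ≤ t⁻¹ * R := by gcongr
      _ < ε := by
          rw [inv_mul_lt_iff₀ ht, div_mul_cancel₀ _ hε.ne']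
          linarith [le_abs_self R]
  exact ⟨s, by simpa [smul_smul, ht.ne'] using hcone _ (hball hdist) t ht, hs⟩

end Cones

section DualCone

variable {E : Type*} [NormedAddCommGroup E] [InnerProductSpace ℝ E] [FiniteDimensional ℝ E]
  {C : Set E}

theorem ProperCone.interior_dual_nonempty (K : ProperCone ℝ E)
    (hK : ∀ v ∈ K, -v ∈ K → v = 0) : (interior {ξ : E | ∀ x ∈ K, 0 ≤ ⟪ξ, x⟫}).Nonempty := by
  set D := {ξ : E | ∀ x ∈ K, 0 ≤ ⟪ξ, x⟫}
  have hD : D = ProperCone.innerDual (K : Set E) := by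
    ext ξ; simp [D, real_inner_comm]
  have hspan : Submodule.span ℝ D = ⊤ := by
    by_contra hne
    obtain ⟨v, hv, hv0⟩ := (Submodule.ne_bot_iff _).1
      (mt Submodule.orthogonal_eq_bot_iff.1 hne)
    have hperp : ∀ ξ ∈ D, ⟪ξ, v⟫ = 0 := fun ξ hξ ↦
      (Submodule.mem_orthogonal _ v).1 hv ξ (Submodule.subset_span hξ)
    have hmem : ∀ w : E, (∀ ξ ∈ D, ⟪ξ, w⟫ = 0) → w ∈ K := fun w hw ↦ by
      rw [← ProperCone.innerDual_innerDual K, ← hD]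
      exact fun ξ hξ ↦ (hw ξ hξ).ge
    exact hv0 (hK v (hmem v hperp)
      (hmem (-v) fun ξ hξ ↦ by rw [inner_neg_right, hperp ξ hξ, neg_zero]))
  have hD0 : (0 : E) ∈ D := fun x _ ↦ (inner_zero_left x).ge
  have hDconv : Convex ℝ D := hD ▸ (ProperCone.innerDual (K : Set E)).convex
  rw [hDconv.interior_nonempty_iff_affineSpan_eq_top,
    AffineSubspace.affineSpan_eq_top_iff_vectorSpan_eq_top_of_nonempty ℝ E E ⟨0, hD0⟩,
    vectorSpan_eq_span_vsub_set_right ℝ hD0]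
  simpa using hspan

theorem interior_dual_closure_nonempty (hopen : IsOpen C)
    (hconv : Convex ℝ C) (hne : C.Nonempty) (hcone : ∀ x ∈ C, ∀ t : ℝ, 0 < t → t • x ∈ C)
    (hline : ∀ x v : E, v ≠ 0 → ¬ ∀ t : ℝ, x + t • v ∈ C) :
    (interior {ξ : E | ∀ x ∈ closure C, 0 ≤ ⟪ξ, x⟫}).Nonempty := by
  obtain ⟨K, hK⟩ := exists_properCone_coe_eq_closure hconv hne hcone
  simp only [← hK, SetLike.mem_coe]
  refine K.interior_dual_nonempty fun v hv hnv ↦ by_contra fun hv0 ↦ ?_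
  obtain ⟨x, hx⟩ := hne
  refine hline x v hv0 fun t ↦ add_mem_of_mem_of_mem_closure hopen hconv hcone hx ?_
  rw [← hK]
  rcases le_total 0 t with ht | ht
  · exact K.smul_mem hv ht
  · simpa using K.smul_mem hnv (neg_nonneg.2 ht)

end DualCone

theorem exists_dualLattice_norm_sub_le {V : Type*} [NormedAddCommGroup V]
    [InnerProductSpace ℝ V] [FiniteDimensional ℝ V]
    (L : AddSubgroup V) (hLdisc : DiscreteTopology L)
    (hLspan : Submodule.span ℝ (L : Set V) = ⊤) :
    ∃ R : ℝ, ∀ x : V, ∃ ξ ∈ {ξ : V | ∀ l ∈ L, ∃ n : ℤ, ⟪ξ, l⟫ = n}, ‖x - ξ‖ ≤ R := by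
  classical
  let L' := L.toIntSubmodule
  have : DiscreteTopology L' := hLdisc
  have : IsZLattice ℝ L' := ⟨by rwa [AddSubgroup.coe_toIntSubmodule]⟩
  have hB : LinearMap.BilinForm.Nondegenerate (innerₗ V) :=
    ⟨fun x hx ↦ (inner_self_eq_zero (𝕜 := ℝ)).1 (hx x),
      fun y hy ↦ (inner_self_eq_zero (𝕜 := ℝ)).1 (hy y)⟩
  let b₀ := Module.Free.chooseBasis ℤ L'
  let b := b₀.ofZLatticeBasis ℝ L'
  let g := LinearMap.BilinForm.dualBasis (innerₗ V) hB b
  refine ⟨∑ i, ‖g i‖, fun x ↦ ⟨ZSpan.floor g x, fun l hl ↦ ?_, ZSpan.norm_fract_le g x⟩⟩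
  have hdual : (ZSpan.floor g x : V) ∈
      LinearMap.BilinForm.dualSubmodule (innerₗ V) (Submodule.span ℤ (range b)) := by
    rw [LinearMap.BilinForm.dualSubmodule_span_of_basis _ hB]
    exact (ZSpan.floor g x).2
  obtain ⟨n, hn⟩ := Submodule.mem_one.1 (hdual l (by rwa [b₀.ofZLatticeBasis_span ℝ L']))
  exact ⟨n, by simpa using hn.symm⟩

theorem finite_image_inner_inter_Iic {V : Type*} [NormedAddCommGroup V] [InnerProductSpace ℝ V]
    (L : AddSubgroup V) (K : Set V) {p : V}
    (hp : p ∈ convexHull ℝ (K ∩ {v : V | ∃ (q : ℚ) (l : V), l ∈ L ∧ v = (q : ℝ) • l}))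
    (M : ℝ) :
    ((⟪·, p⟫) '' {ξ | (∀ x ∈ K, 0 ≤ ⟪ξ, x⟫) ∧ ∀ l ∈ L, ∃ n : ℤ, ⟪ξ, l⟫ = n} ∩ Iic M).Finite := by
  obtain ⟨ι, _, w, z, hw₀, -, hz, rfl⟩ := mem_convexHull_iff_exists_fintype.1 hp
  choose hzK q l hl hzl using hz
  let A : ι → Set ℝ := fun i ↦ (AddSubgroup.zmultiples (w i * q i) : Set ℝ) ∩ Ici 0
  refine (finite_image_sum_inter_Iic (A := A) (fun i ↦ inter_subset_right) (fun i M ↦ ?_)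
    M).subset ?_
  · rw [inter_assoc, Ici_inter_Iic]
    exact finite_zmultiples_inter_Icc _ _ _
  rintro _ ⟨⟨ξ, ⟨hξK, hξL⟩, rfl⟩, hM⟩
  refine ⟨⟨fun i ↦ w i * ⟪ξ, z i⟫, fun i _ ↦ ⟨?_, mul_nonneg (hw₀ i) (hξK _ (hzK i))⟩, ?_⟩, hM⟩
  · obtain ⟨n, hn⟩ := hξL _ (hl i)
    refine ⟨n, ?_⟩
    show n • (w i * (q i : ℝ)) = w i * ⟪ξ, z i⟫
    rw [hzl i, real_inner_smul_right, hn, zsmul_eq_mul]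
    ring
  · simp [inner_sum, real_inner_smul_right]

/-- Let `L` be a lattice in `V`, `C` an open nondegenerate convex
cone and `p ∈ C_+`, the convex hull of the rational points of `closure C`
(rational = rational multiples of lattice vectors). Identifying `V*` with `V`
via the inner product, the set `{ξ(p) : ξ ∈ C° ∩ L*}` is a discrete subset of
`ℝ≥0`, and in particular `ξ ↦ ξ(p)` attains a minimum on `C° ∩ L*`. -/
theorem stmt_9 {V : Type*} [NormedAddCommGroup V] [InnerProductSpace ℝ V]
    [FiniteDimensional ℝ V]
    (L : AddSubgroup V) (hLdisc : DiscreteTopology L)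
    (hLspan : Submodule.span ℝ (L : Set V) = ⊤)
    (C : Set V) (hCopen : IsOpen C) (hCconv : Convex ℝ C) (hCne : C.Nonempty)
    (hCcone : ∀ x ∈ C, ∀ t : ℝ, 0 < t → t • x ∈ C)
    (hCnd : ∀ x v : V, v ≠ 0 → ¬ ∀ t : ℝ, x + t • v ∈ C)
    (Cdeg : Set V) (hCdeg : Cdeg = interior {ξ : V | ∀ x ∈ closure C, 0 ≤ ⟪ξ, x⟫})
    (Lstar : Set V) (hLstar : Lstar = {ξ : V | ∀ l ∈ L, ∃ n : ℤ, ⟪ξ, l⟫ = (n : ℝ)})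
    (p : V)
    (hp : p ∈ convexHull ℝ
      (closure C ∩ {v : V | ∃ (q : ℚ) (l : V), l ∈ L ∧ v = (q : ℝ) • l})) :
    {r : ℝ | ∃ ξ ∈ Cdeg ∩ Lstar, r = ⟪ξ, p⟫} ⊆ Set.Ici (0 : ℝ) ∧
      (∀ r ∈ {r : ℝ | ∃ ξ ∈ Cdeg ∩ Lstar, r = ⟪ξ, p⟫},
        ∃ ε > (0 : ℝ), ∀ r' ∈ {r : ℝ | ∃ ξ ∈ Cdeg ∩ Lstar, r = ⟪ξ, p⟫},
          |r' - r| < ε → r' = r) ∧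
      ∃ ξ₀ ∈ Cdeg ∩ Lstar, ∀ ξ ∈ Cdeg ∩ Lstar, ⟪ξ₀, p⟫ ≤ ⟪ξ, p⟫ := by
  have hvalues : {r : ℝ | ∃ ξ ∈ Cdeg ∩ Lstar, r = ⟪ξ, p⟫} = (⟪·, p⟫) '' (Cdeg ∩ Lstar) := by
    ext; simp [eq_comm]
  have hdual : Cdeg ⊆ {ξ : V | ∀ x ∈ closure C, 0 ≤ ⟪ξ, x⟫} := hCdeg ▸ interior_subset
  have hdualLattice : Lstar ⊆ {ξ : V | ∀ l ∈ L, ∃ n : ℤ, ⟪ξ, l⟫ = n} := hLstar.subset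
  have hfin : ∀ M, ((⟪·, p⟫) '' (Cdeg ∩ Lstar) ∩ Iic M).Finite := fun M ↦
    (finite_image_inner_inter_Iic L (closure C) hp M).subset
      (inter_subset_inter_left _ (image_mono fun ξ hξ ↦ ⟨hdual hξ.1, hdualLattice hξ.2⟩))
  have hne : (Cdeg ∩ Lstar).Nonempty := by
    obtain ⟨R, hR⟩ := exists_dualLattice_norm_sub_le L hLdisc hLspan
    subst hCdeg hLstar
    exact exists_mem_inter_of_isOpen_of_smul_mem isOpen_interior
      (interior_dual_closure_nonempty hCopen hCconv hCne hCcone hCnd)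
      (smul_mem_interior_of_smul_mem fun ξ hξ t ht x hx ↦ by
        rw [real_inner_smul_left]; exact mul_nonneg ht.le (hξ x hx)) hR
  have hpC : p ∈ closure C := convexHull_min inter_subset_left hCconv.closure hp
  rw [hvalues]
  refine ⟨?_, fun r _ ↦ exists_pos_forall_eq_of_finite_inter_Iic hfin r,
    exists_forall_le_of_finite_image_inter_Iic hne hfin⟩
  rintro _ ⟨ξ, hξ, rfl⟩
  exact hdual hξ.1 p hpC
end

section
/- Let C be an open nondegenerate convex cone in a finite-dimensional real vector space V, Γ ≤ GL(V) a group preserving C and a lattice L. Then for every y ∈ C, the set U₀ of ξ in the open dual cone C° such that ξ(y') > ξ(y) for all y' ∈ Γy \ {y}, is an open convex cone in C°, and it is nonempty. -/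
/-!
A functional `ξ` in the interior of the dual cone satisfies `ε‖x‖ ≤ ξ(x)` on `C` for some `ε > 0`,
and such functionals exist because the dual of a line-free open convex cone spans `V`. Since `Γ`
preserves `C`, applying this to the points `γ(y ± u)` of `C` bounds the operator norm of `γ` by a
multiple of `ξ(γy)`; as `Γ` also preserves the discrete spanning group `L`, only finitely many
orbit points lie in any ball. Near a given `ξ`, orbit points outside a fixed ball satisfy
`ξ(y) < ξ(γy)` automatically, so only finitely many strict inequalities matter: this gives
openness. For nonemptiness, a generic `ξ` near an interior point of the dual cone separates those
finitely many points, hence has a unique minimizer `γ₀y` on the orbit, and then the adjoint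
`γ₀* ξ` has its unique minimum at `y`.
-/

open scoped RealInnerProductSpace

section

open Set Metric ProperCone

variable {V : Type*} [NormedAddCommGroup V] [InnerProductSpace ℝ V] {C : Set V}
  {Γ : Subgroup (LinearMap.GeneralLinearGroup ℝ V)} {y : V}

abbrev linearOrbit (Γ : Subgroup (LinearMap.GeneralLinearGroup ℝ V)) (y : V) : Set V :=
  (fun γ : LinearMap.GeneralLinearGroup ℝ V => (γ : V →ₗ[ℝ] V) y) '' Γ

theorem abs_inner_sub_inner_le (ξ η x : V) : |⟪ξ, x⟫ - ⟪η, x⟫| ≤ ‖ξ - η‖ * ‖x‖ := by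
  rw [← inner_sub_left]
  exact abs_real_inner_le_norm _ _

theorem opNorm_le_inner_div_of_mapsTo {ξ : V} {ε r : ℝ} (hε : 0 < ε) (hr : 0 < r)
    (hξ : ∀ x ∈ C, ε * ‖x‖ ≤ ⟪ξ, x⟫) (hy : closedBall y r ⊆ C) {f : V →L[ℝ] V}
    (hf : MapsTo f C C) : ‖f‖ ≤ ⟪ξ, f y⟫ / (ε * r) := by
  have hfy := hξ _ (hf (hy (mem_closedBall_self hr.le)))
  refine ContinuousLinearMap.opNorm_le_of_unit_norm
    (div_nonneg ((by positivity : 0 ≤ ε * ‖f y‖).trans hfy) (by positivity)) fun x hx => ?_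
  have hrx : ‖r • x‖ = r := by rw [norm_smul, hx, Real.norm_of_nonneg hr.le, mul_one]
  have hplus := hξ _ (hf (hy (show y + r • x ∈ closedBall y r by
    rw [mem_closedBall, dist_eq_norm, add_sub_cancel_left, hrx])))
  have hminus := hξ _ (hf (hy (show y - r • x ∈ closedBall y r by
    rw [mem_closedBall, dist_eq_norm, sub_sub_cancel_left, norm_neg, hrx])))
  rw [map_add, map_smul, inner_add_right] at hplus
  rw [map_sub, map_smul, inner_sub_right] at hminus
  have htri : 2 * r * ‖f x‖ ≤ ‖f y + r • f x‖ + ‖f y - r • f x‖ :=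
    calc 2 * r * ‖f x‖ = ‖(f y + r • f x) - (f y - r • f x)‖ := by
          rw [add_sub_sub_cancel, ← two_smul ℝ, smul_smul, norm_smul,
            Real.norm_of_nonneg (by positivity)]
      _ ≤ _ := norm_sub_le _ _
  rw [le_div_iff₀ (by positivity)]
  nlinarith

theorem dense_setOf_inner_ne_zero {w : V} (hw : w ≠ 0) : Dense {ξ : V | ⟪ξ, w⟫ ≠ 0} := by
  have hker : {ξ : V | ⟪ξ, w⟫ ≠ 0} = ((LinearMap.ker (innerₛₗ ℝ w) : Submodule ℝ V) : Set V)ᶜ := by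
    ext ξ
    simp [real_inner_comm]
  rw [hker, ← interior_eq_empty_iff_dense_compl, ← not_nonempty_iff_eq_empty]
  intro hint
  have hw' : w ∈ LinearMap.ker (innerₛₗ ℝ w) := by
    rw [Submodule.eq_top_of_nonempty_interior' _ hint]
    exact Submodule.mem_top
  simp [hw] at hw'

section Complete

variable [CompleteSpace V]

theorem mem_interior_innerDual_iff {ξ : V} :
    ξ ∈ interior (innerDual C : Set V) ↔ ∃ ε > 0, ∀ x ∈ C, ε * ‖x‖ ≤ ⟪ξ, x⟫ := by
  constructor
  · intro hξ
    obtain ⟨ε, hε, hball⟩ := Metric.isOpen_iff.1 isOpen_interior ξ hξ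
    refine ⟨ε / 2, half_pos hε, fun x hx => ?_⟩
    rcases eq_or_ne x 0 with rfl | hx0
    · simp
    have hmem : ξ - (ε / 2 / ‖x‖) • x ∈ (innerDual C : Set V) := by
      refine interior_subset (hball ?_)
      rw [mem_ball, dist_eq_norm, sub_sub_cancel_left, norm_neg, norm_smul, Real.norm_eq_abs,
        abs_of_pos (by positivity), div_mul_cancel₀ _ (norm_ne_zero_iff.2 hx0)]
      exact half_lt_self hε
    have hξx := mem_innerDual.1 hmem hx
    rw [inner_sub_right, real_inner_smul_right, real_inner_self_eq_norm_mul_norm,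
      real_inner_comm] at hξx
    have hnorm : ε / 2 / ‖x‖ * (‖x‖ * ‖x‖) = ε / 2 * ‖x‖ := by
      field_simp
    linarith
  · rintro ⟨ε, hε, hbound⟩
    refine interior_maximal (fun η hη => mem_innerDual.2 fun x hx => ?_) isOpen_ball
      (mem_ball_self hε)
    have hdist : ‖η - ξ‖ * ‖x‖ ≤ ε * ‖x‖ :=
      mul_le_mul_of_nonneg_right (mem_ball_iff_norm.1 hη).le (norm_nonneg x)
    have hclose := abs_le.1 (abs_inner_sub_inner_le η ξ x)
    rw [real_inner_comm]
    linarith [hbound x hx]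

theorem mem_of_forall_innerDual_inner_le (hCopen : IsOpen C) (hCconv : Convex ℝ C)
    (hCcone : ∀ x ∈ C, ∀ t : ℝ, 0 < t → t • x ∈ C) {x w : V} (hx : x ∈ C)
    (hw : ∀ ξ ∈ innerDual C, ⟪ξ, x⟫ ≤ ⟪ξ, w⟫) : w ∈ C := by
  by_contra hwC
  obtain ⟨f, hf⟩ := geometric_hahn_banach_open_point hCconv hCopen hwC
  have hf_nonpos : ∀ a ∈ C, f a ≤ 0 := by
    intro a ha
    by_contra! hpos
    have hlt := hf _ (hCcone a ha ((|f w| + 1) / f a) (by positivity))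
    rw [map_smul, smul_eq_mul, div_mul_cancel₀ _ hpos.ne'] at hlt
    linarith [le_abs_self (f w)]
  set ξ := -(InnerProductSpace.toDual ℝ V).symm f
  have hξf : ∀ a, ⟪ξ, a⟫ = -f a := fun a => by
    simp [ξ, inner_neg_left, InnerProductSpace.toDual_symm_apply]
  have hξ : ξ ∈ innerDual C := mem_innerDual.2 fun a ha => by
    rw [real_inner_comm, hξf]; linarith [hf_nonpos a ha]
  have hle := hw ξ hξ
  rw [hξf, hξf] at hle
  linarith [hf x hx]

theorem dense_setOf_injOn_inner {S : Set V} (hS : S.Finite) :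
    Dense {ξ : V | InjOn (fun z => ⟪ξ, z⟫) S} := by
  refine Dense.mono ?_ (dense_biInter_of_isOpen (S := {p ∈ S ×ˢ S | p.1 ≠ p.2})
    (f := fun p => {ξ : V | ⟪ξ, p.1 - p.2⟫ ≠ 0})
    (fun p _ => isOpen_ne_fun (by fun_prop) continuous_const)
    ((hS.prod hS).subset (sep_subset _ _)).countable
    fun p hp => dense_setOf_inner_ne_zero (sub_ne_zero.2 hp.2))
  intro ξ hξ a ha b hb hab
  by_contra hne
  exact mem_iInter₂.1 hξ (a, b) ⟨⟨ha, hb⟩, hne⟩ (by simp [inner_sub_right, hab])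

def uniqueMinimizerCone (C : Set V) (Γ : Subgroup (LinearMap.GeneralLinearGroup ℝ V)) (y : V) :
    Set V :=
  {ξ ∈ interior (innerDual C : Set V) | ∀ γ ∈ Γ, (γ : V →ₗ[ℝ] V) y ≠ y →
    ⟪ξ, y⟫ < ⟪ξ, (γ : V →ₗ[ℝ] V) y⟫}

theorem convex_uniqueMinimizerCone : Convex ℝ (uniqueMinimizerCone C Γ y) := by
  rintro ξ₁ ⟨h₁, hlt₁⟩ ξ₂ ⟨h₂, hlt₂⟩ a b ha hb hab
  refine ⟨(innerDual C).convex.interior h₁ h₂ ha hb hab, fun γ hγ hne => ?_⟩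
  simp only [inner_add_left, real_inner_smul_left]
  rcases ha.eq_or_lt with rfl | ha
  · rw [zero_add] at hab
    simpa [hab] using hlt₂ γ hγ hne
  · exact add_lt_add_of_lt_of_le (mul_lt_mul_of_pos_left (hlt₁ γ hγ hne) ha)
      (mul_le_mul_of_nonneg_left (hlt₂ γ hγ hne).le hb)

theorem smul_mem_uniqueMinimizerCone {ξ : V} (hξ : ξ ∈ uniqueMinimizerCone C Γ y) {t : ℝ}
    (ht : 0 < t) : t • ξ ∈ uniqueMinimizerCone C Γ y := by
  obtain ⟨hξD, hlt⟩ := hξ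
  obtain ⟨ε, hε, hεξ⟩ := mem_interior_innerDual_iff.1 hξD
  refine ⟨mem_interior_innerDual_iff.2 ⟨t * ε, by positivity, fun x hx => ?_⟩, fun γ hγ hne => ?_⟩
  · rw [real_inner_smul_left, mul_assoc]
    exact mul_le_mul_of_nonneg_left (hεξ x hx) ht.le
  · simp only [real_inner_smul_left]
    exact mul_lt_mul_of_pos_left (hlt γ hγ hne) ht

end Complete

section FiniteDimensional

variable [FiniteDimensional ℝ V]

theorem span_innerDual_eq_top (hCopen : IsOpen C) (hCconv : Convex ℝ C)
    (hCcone : ∀ x ∈ C, ∀ t : ℝ, 0 < t → t • x ∈ C)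
    (hCnd : ∀ x v : V, v ≠ 0 → ¬ ∀ t : ℝ, x + t • v ∈ C) (hC : C.Nonempty) :
    Submodule.span ℝ (innerDual C : Set V) = ⊤ := by
  rw [← Submodule.orthogonal_eq_bot_iff, Submodule.eq_bot_iff]
  intro v hv
  by_contra hv0
  obtain ⟨x, hx⟩ := hC
  refine hCnd x v hv0 fun t => mem_of_forall_innerDual_inner_le hCopen hCconv hCcone hx
    fun ξ hξ => ?_
  rw [inner_add_right, real_inner_smul_right,
    Submodule.inner_right_of_mem_orthogonal (Submodule.subset_span hξ) hv, mul_zero, add_zero]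

theorem interior_innerDual_nonempty (hCopen : IsOpen C) (hCconv : Convex ℝ C)
    (hCcone : ∀ x ∈ C, ∀ t : ℝ, 0 < t → t • x ∈ C)
    (hCnd : ∀ x v : V, v ≠ 0 → ¬ ∀ t : ℝ, x + t • v ∈ C) (hC : C.Nonempty) :
    (interior (innerDual C : Set V)).Nonempty := by
  rw [(innerDual C).convex.interior_nonempty_iff_affineSpan_eq_top,
    AffineSubspace.affineSpan_eq_top_iff_vectorSpan_eq_top_of_nonempty ℝ V V (innerDual C).nonempty,
    vectorSpan_eq_span_vsub_set_right ℝ (mem_innerDual.2 (by simp) : (0 : V) ∈ innerDual C)]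
  simpa using span_innerDual_eq_top hCopen hCconv hCcone hCnd hC

theorem finite_setOf_mapsTo_opNorm_le (L : AddSubgroup V) [DiscreteTopology L]
    (hL : Submodule.span ℝ (L : Set V) = ⊤) (B : ℝ) :
    {f : V →L[ℝ] V | MapsTo f L L ∧ ‖f‖ ≤ B}.Finite := by
  obtain ⟨b, hbL, hbspan, hbind⟩ := exists_linearIndependent ℝ (L : Set V)
  rw [hL] at hbspan
  have : Finite b := hbind.finite
  have hpts : ∀ i : b, ((L : Set V) ∩ closedBall 0 (B * ‖(i : V)‖)).Finite := fun i => by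
    rw [inter_comm]
    exact finite_isBounded_inter_isClosed DiscreteTopology.isDiscrete isBounded_closedBall
      AddSubgroup.isClosed_of_discrete
  refine Finite.of_finite_image (f := fun f (i : b) => f i) ((Finite.pi hpts).subset ?_) ?_
  · rintro _ ⟨f, ⟨hfL, hfB⟩, rfl⟩
    refine mem_univ_pi.2 fun i => ⟨hfL (hbL i.2), ?_⟩
    rw [mem_closedBall, dist_zero_right]
    exact f.le_of_opNorm_le hfB _
  · intro f _ g _ hfg
    exact ContinuousLinearMap.coe_injective <| LinearMap.ext_on hbspan fun x hx =>
      congrFun hfg ⟨x, hx⟩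

theorem finite_orbit_inter_closedBall (L : AddSubgroup V) [DiscreteTopology L]
    (hL : Submodule.span ℝ (L : Set V) = ⊤) (hCopen : IsOpen C)
    (hC : (interior (innerDual C : Set V)).Nonempty) (hΓC : ∀ γ ∈ Γ, MapsTo (γ : V →ₗ[ℝ] V) C C)
    (hΓL : ∀ γ ∈ Γ, MapsTo (γ : V →ₗ[ℝ] V) L L) (hy : y ∈ C) (R : ℝ) :
    (linearOrbit Γ y ∩ closedBall 0 R).Finite := by
  obtain ⟨ξ, hξ⟩ := hC
  obtain ⟨ε, hε, hεξ⟩ := mem_interior_innerDual_iff.1 hξ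
  obtain ⟨r, hr, hry⟩ := nhds_basis_closedBall.mem_iff.1 (hCopen.mem_nhds hy)
  refine ((finite_setOf_mapsTo_opNorm_le L hL (‖ξ‖ * R / (ε * r))).image fun f => f y).subset ?_
  rintro _ ⟨⟨γ, hγ, rfl⟩, hR⟩
  refine ⟨LinearMap.toContinuousLinearMap (γ : V →ₗ[ℝ] V), ⟨hΓL γ hγ, ?_⟩, rfl⟩
  refine (opNorm_le_inner_div_of_mapsTo hε hr hεξ hry (hΓC γ hγ)).trans ?_
  gcongr
  exact (real_inner_le_norm _ _).trans
    (mul_le_mul_of_nonneg_left (mem_closedBall_zero_iff.1 hR) (norm_nonneg ξ))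

theorem mapsTo_adjoint_interior_innerDual {g : LinearMap.GeneralLinearGroup ℝ V}
    (hg : MapsTo (g : V →ₗ[ℝ] V) C C) :
    MapsTo (LinearMap.adjoint (g : V →ₗ[ℝ] V)) (interior (innerDual C : Set V))
      (interior (innerDual C : Set V)) := by
  have hD : MapsTo (LinearMap.adjoint (g : V →ₗ[ℝ] V)) (innerDual C) (innerDual C) :=
    fun ξ hξ => mem_innerDual.2 fun x hx => by
      rw [LinearMap.adjoint_inner_right]
      exact hξ (hg hx)
  have hsurj : Function.Surjective (LinearMap.adjoint (g : V →ₗ[ℝ] V)) := fun ξ =>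
    ⟨LinearMap.adjoint ((g⁻¹ : LinearMap.GeneralLinearGroup ℝ V) : V →ₗ[ℝ] V) ξ, by
      rw [← LinearMap.comp_apply, ← LinearMap.adjoint_comp, ← Module.End.mul_eq_comp,
        Units.inv_mul, Module.End.one_eq_id, LinearMap.adjoint_id, LinearMap.id_apply]⟩
  exact fun ξ hξ => interior_mono hD.image_subset
    ((LinearMap.isOpenMap_of_finiteDimensional _ hsurj).image_interior_subset _
      (mem_image_of_mem _ hξ))

theorem exists_finite_forall_inner_lt (hΓC : ∀ γ ∈ Γ, MapsTo (γ : V →ₗ[ℝ] V) C C) (hy : y ∈ C)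
    (hfin : ∀ R : ℝ, (linearOrbit Γ y ∩ closedBall 0 R).Finite)
    {ξ₀ : V} (hξ₀ : ξ₀ ∈ interior (innerDual C : Set V)) :
    ∃ δ > 0, ∃ F ⊆ linearOrbit Γ y, F.Finite ∧ ∀ ξ ∈ ball ξ₀ δ,
      ξ ∈ interior (innerDual C : Set V) ∧ ∀ z ∈ linearOrbit Γ y, z ∉ F → ⟪ξ, y⟫ < ⟪ξ, z⟫ := by
  obtain ⟨ε, hε, hεξ⟩ := mem_interior_innerDual_iff.1 hξ₀
  set c := ⟪ξ₀, y⟫ + ε / 2 * ‖y‖ with hc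
  refine ⟨ε / 2, half_pos hε, _, inter_subset_left, hfin (2 * c / ε), fun ξ hξ => ?_⟩
  have hdist : ‖ξ - ξ₀‖ < ε / 2 := mem_ball_iff_norm.1 hξ
  have hclose : ∀ x, |⟪ξ, x⟫ - ⟪ξ₀, x⟫| ≤ ε / 2 * ‖x‖ := fun x =>
    (abs_inner_sub_inner_le ξ ξ₀ x).trans (mul_le_mul_of_nonneg_right hdist.le (norm_nonneg x))
  have hbound : ∀ x ∈ C, ε / 2 * ‖x‖ ≤ ⟪ξ, x⟫ := fun x hx => by
    linarith [hεξ x hx, (abs_le.1 (hclose x)).1]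
  refine ⟨mem_interior_innerDual_iff.2 ⟨ε / 2, half_pos hε, hbound⟩, ?_⟩
  rintro _ ⟨γ, hγ, rfl⟩ hF
  have hfar : 2 * c / ε < ‖(γ : V →ₗ[ℝ] V) y‖ := by
    by_contra! h
    exact hF ⟨⟨γ, hγ, rfl⟩, mem_closedBall_zero_iff.2 h⟩
  calc ⟪ξ, y⟫ ≤ c := by linarith [(abs_le.1 (hclose y)).2, hc]
    _ = ε / 2 * (2 * c / ε) := by field_simp
    _ < ε / 2 * ‖(γ : V →ₗ[ℝ] V) y‖ := mul_lt_mul_of_pos_left hfar (half_pos hε)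
    _ ≤ _ := hbound _ (hΓC γ hγ hy)

theorem isOpen_uniqueMinimizerCone (hΓC : ∀ γ ∈ Γ, MapsTo (γ : V →ₗ[ℝ] V) C C) (hy : y ∈ C)
    (hfin : ∀ R : ℝ, (linearOrbit Γ y ∩ closedBall 0 R).Finite) :
    IsOpen (uniqueMinimizerCone C Γ y) := by
  refine isOpen_iff_forall_mem_open.2 fun ξ₀ hξ₀ => ?_
  obtain ⟨δ, hδ, F, hForb, hF, hball⟩ := exists_finite_forall_inner_lt hΓC hy hfin hξ₀.1
  refine ⟨ball ξ₀ δ ∩ ⋂ z ∈ F \ {y}, {ξ | ⟪ξ, y⟫ < ⟪ξ, z⟫}, ?_, ?_, ?_⟩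
  · rintro ξ ⟨hξδ, hξF⟩
    obtain ⟨hξD, hξfar⟩ := hball ξ hξδ
    refine ⟨hξD, fun γ hγ hne => ?_⟩
    by_cases h : (γ : V →ₗ[ℝ] V) y ∈ F
    · exact mem_iInter₂.1 hξF _ ⟨h, hne⟩
    · exact hξfar _ ⟨γ, hγ, rfl⟩ h
  · exact isOpen_ball.inter (hF.sdiff.isOpen_biInter fun z _ =>
      isOpen_lt (by fun_prop) (by fun_prop))
  · refine ⟨mem_ball_self hδ, mem_iInter₂.2 fun z hz => ?_⟩
    obtain ⟨γ, hγ, rfl⟩ := hForb hz.1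
    exact hξ₀.2 γ hγ hz.2

theorem uniqueMinimizerCone_nonempty (hΓC : ∀ γ ∈ Γ, MapsTo (γ : V →ₗ[ℝ] V) C C) (hy : y ∈ C)
    (hfin : ∀ R : ℝ, (linearOrbit Γ y ∩ closedBall 0 R).Finite)
    (hC : (interior (innerDual C : Set V)).Nonempty) :
    (uniqueMinimizerCone C Γ y).Nonempty := by
  obtain ⟨ξ₀, hξ₀⟩ := hC
  obtain ⟨δ, hδ, F, hForb, hF, hball⟩ := exists_finite_forall_inner_lt hΓC hy hfin hξ₀
  obtain ⟨ξ, hξδ, hξinj⟩ := (dense_setOf_injOn_inner (hF.insert y)).inter_open_nonempty _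
    isOpen_ball ⟨ξ₀, mem_ball_self hδ⟩
  obtain ⟨hξD, hξfar⟩ := hball ξ hξδ
  obtain ⟨z₀, hz₀, hmin⟩ := (insert y F).exists_min_image (fun z => ⟪ξ, z⟫) (hF.insert y)
    (insert_nonempty _ _)
  obtain ⟨γ₀, hγ₀, rfl⟩ : z₀ ∈ linearOrbit Γ y := by
    rcases hz₀ with rfl | hz₀
    · exact ⟨1, Γ.one_mem, rfl⟩
    · exact hForb hz₀
  have hstrict : ∀ γ ∈ Γ, (γ : V →ₗ[ℝ] V) y ≠ (γ₀ : V →ₗ[ℝ] V) y →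
      ⟪ξ, (γ₀ : V →ₗ[ℝ] V) y⟫ < ⟪ξ, (γ : V →ₗ[ℝ] V) y⟫ := by
    intro γ hγ hne
    by_cases h : (γ : V →ₗ[ℝ] V) y ∈ insert y F
    · exact (hmin _ h).lt_of_ne fun heq => hne (hξinj h hz₀ heq.symm)
    · exact (hmin y (mem_insert _ _)).trans_lt
        (hξfar _ ⟨γ, hγ, rfl⟩ fun h' => h (mem_insert_of_mem _ h'))
  refine ⟨LinearMap.adjoint (γ₀ : V →ₗ[ℝ] V) ξ, mapsTo_adjoint_interior_innerDual (hΓC γ₀ hγ₀) hξD,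
    fun γ hγ hne => ?_⟩
  rw [LinearMap.adjoint_inner_left, LinearMap.adjoint_inner_left]
  exact hstrict (γ₀ * γ) (mul_mem hγ₀ hγ)
    ((LinearMap.GeneralLinearGroup.toLinearEquiv γ₀).injective.ne hne)

end FiniteDimensional

end

theorem stmt_11_general {V : Type*} [NormedAddCommGroup V] [InnerProductSpace ℝ V]
    [FiniteDimensional ℝ V]
    (L : AddSubgroup V) (hLdisc : DiscreteTopology L)
    (hLspan : Submodule.span ℝ (L : Set V) = ⊤)
    (C : Set V) (hCopen : IsOpen C) (hCconv : Convex ℝ C)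
    (hCcone : ∀ x ∈ C, ∀ t : ℝ, 0 < t → t • x ∈ C)
    (hCnd : ∀ x v : V, v ≠ 0 → ¬ ∀ t : ℝ, x + t • v ∈ C)
    (Γ : Subgroup (LinearMap.GeneralLinearGroup ℝ V))
    (hΓC : ∀ γ ∈ Γ, (γ : V →ₗ[ℝ] V) '' C = C)
    (hΓL : ∀ γ ∈ Γ, (γ : V →ₗ[ℝ] V) '' (L : Set V) = (L : Set V))
    (y : V) (hy : y ∈ C)
    (Cdeg : Set V) (hCdeg : Cdeg = interior {ξ : V | ∀ x ∈ C, 0 ≤ ⟪ξ, x⟫})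
    (U₀ : Set V)
    (hU₀ : U₀ = {ξ ∈ Cdeg | ∀ γ ∈ Γ, (γ : V →ₗ[ℝ] V) y ≠ y →
      ⟪ξ, y⟫ < ⟪ξ, (γ : V →ₗ[ℝ] V) y⟫}) :
    IsOpen U₀ ∧ Convex ℝ U₀ ∧ (∀ ξ ∈ U₀, ∀ t : ℝ, 0 < t → t • ξ ∈ U₀) ∧
      U₀ ⊆ Cdeg ∧ U₀.Nonempty := by
  have hD : {ξ : V | ∀ x ∈ C, 0 ≤ ⟪ξ, x⟫} = ProperCone.innerDual C := by
    ext ξ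
    simp [real_inner_comm]
  have hΓC' : ∀ γ ∈ Γ, Set.MapsTo (γ : V →ₗ[ℝ] V) C C := fun γ hγ =>
    Set.mapsTo_iff_image_subset.2 (hΓC γ hγ).le
  have hΓL' : ∀ γ ∈ Γ, Set.MapsTo (γ : V →ₗ[ℝ] V) L L := fun γ hγ =>
    Set.mapsTo_iff_image_subset.2 (hΓL γ hγ).le
  have hint := interior_innerDual_nonempty hCopen hCconv hCcone hCnd ⟨y, hy⟩
  have hfin := finite_orbit_inter_closedBall L hLspan hCopen hint hΓC' hΓL' hy
  subst hCdeg hU₀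
  rw [hD]
  exact ⟨isOpen_uniqueMinimizerCone hΓC' hy hfin, convex_uniqueMinimizerCone,
    fun ξ hξ t ht => smul_mem_uniqueMinimizerCone hξ ht, Set.sep_subset _ _,
    uniqueMinimizerCone_nonempty hΓC' hy hfin hint⟩

/-- Let `Γ ≤ GL(V)` preserve an open nondegenerate convex cone `C`
and a lattice `L`. Identifying `V*` with `V` via the inner product, for every
`y ∈ C` the set `U₀` of `ξ` in the open dual cone `C°` with `ξ(y') > ξ(y)` for
all `y' ∈ Γy \ {y}` is a nonempty open convex cone contained in `C°`. -/
theorem stmt_11 {V : Type*} [NormedAddCommGroup V] [InnerProductSpace ℝ V]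
    [FiniteDimensional ℝ V]
    (L : AddSubgroup V) (hLdisc : DiscreteTopology L)
    (hLspan : Submodule.span ℝ (L : Set V) = ⊤)
    (C : Set V) (hCopen : IsOpen C) (hCconv : Convex ℝ C) (hCne : C.Nonempty)
    (hCcone : ∀ x ∈ C, ∀ t : ℝ, 0 < t → t • x ∈ C)
    (hCnd : ∀ x v : V, v ≠ 0 → ¬ ∀ t : ℝ, x + t • v ∈ C)
    (Γ : Subgroup (LinearMap.GeneralLinearGroup ℝ V))
    (hΓC : ∀ γ ∈ Γ, (γ : V →ₗ[ℝ] V) '' C = C)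
    (hΓL : ∀ γ ∈ Γ, (γ : V →ₗ[ℝ] V) '' (L : Set V) = (L : Set V))
    (y : V) (hy : y ∈ C)
    (Cdeg : Set V) (hCdeg : Cdeg = interior {ξ : V | ∀ x ∈ C, 0 ≤ ⟪ξ, x⟫})
    (U₀ : Set V)
    (hU₀ : U₀ = {ξ ∈ Cdeg | ∀ γ ∈ Γ, (γ : V →ₗ[ℝ] V) y ≠ y →
      ⟪ξ, y⟫ < ⟪ξ, (γ : V →ₗ[ℝ] V) y⟫}) :
    IsOpen U₀ ∧ Convex ℝ U₀ ∧ (∀ ξ ∈ U₀, ∀ t : ℝ, 0 < t → t • ξ ∈ U₀) ∧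
      U₀ ⊆ Cdeg ∧ U₀.Nonempty :=
  stmt_11_general L hLdisc hLspan C hCopen hCconv hCcone hCnd Γ hΓC hΓL y hy Cdeg hCdeg U₀ hU₀
end

section
/- Let (V(ℚ), C, Γ) be such that Γ ≤ GL(V) preserves C and some lattice L in V(ℚ), and suppose there exists a polyhedral cone Π ⊆ C_+ with Γ·Π ⊇ C. Then Γ has only finitely many orbits on the set of extreme points of [C ∩ L], for every Γ-invariant lattice L ⊆ V(ℚ). -/
/-!
By Minkowski–Weyl the polyhedral cone `Π` is spanned by finitely many vectors. Each lies in the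
convex hull of rational points of `closure C`, and every rational point has a positive multiple
in `L`, so `Π` is spanned by a finite set `A ⊆ closure C ∩ L`. If an extreme point `x` of
`[C ∩ L]` lying in `Π` had a coefficient `c > 1` on some `u ∈ A`, then `x + u` and
`x - u = (1 - c⁻¹) x + c⁻¹ (x - c u)` would both lie in `C ∩ L` (the latter because `C` is open),
contradicting extremality. Hence the extreme points in `Π` have norm at most `∑ ‖u‖`, and there
are finitely many of them since `L` is discrete. Finally `Γ` permutes the extreme points and
`Γ·Π ⊇ C`, so every extreme point is a `Γ`-translate of one lying in `Π`.
-/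

/-- A polyhedral cone: a cone defined by finitely many linear inequalities. -/
def IsPolyhedralCone {V : Type*} [AddCommGroup V] [Module ℝ V] (P : Set V) : Prop :=
  ∃ s : Finset (V →ₗ[ℝ] ℝ), P = {x : V | ∀ ξ ∈ s, 0 ≤ ξ x}

open Set Metric Filter Topology PointedCone

section MinkowskiWeyl

variable {V : Type*} [AddCommGroup V] [Module ℝ V]

theorem smul_sub_smul_mem_hull_image2 (η : V →ₗ[ℝ] ℝ) {S T : Set V} {y z : V}
    (hy : y ∈ hull ℝ S) (hz : z ∈ hull ℝ T) :
    η y • z - η z • y ∈ hull ℝ (image2 (fun g h => η g • h - η h • g) S T) := by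
  let B : V →ₗ[ℝ] V →ₗ[ℝ] V := LinearMap.mk₂ ℝ (fun y z => η y • z - η z • y)
    (fun _ _ _ => by simp only [map_add, add_smul, smul_add]; abel)
    (fun _ _ _ => by simp only [map_smul, smul_eq_mul]; module)
    (fun _ _ _ => by simp only [map_add, add_smul, smul_add]; abel)
    (fun _ _ _ => by simp only [map_smul, smul_eq_mul]; module)
  have := Submodule.apply_mem_map₂ (B.restrictScalars₁₂ {c : ℝ // 0 ≤ c} {c : ℝ // 0 ≤ c}) hy hz
  rwa [Submodule.map₂_span_span] at this

theorem eq_zero_or_neg_of_mem_hull (η : V →ₗ[ℝ] ℝ) {S : Set V} (hS : ∀ h ∈ S, η h < 0) {z : V}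
    (hz : z ∈ hull ℝ S) : z = 0 ∨ η z < 0 := by
  induction hz using Submodule.span_induction with
  | mem h hh => exact .inr (hS h hh)
  | zero => exact .inl rfl
  | add a b _ _ ha hb =>
    rcases ha with rfl | ha <;> rcases hb with rfl | hb
    · exact .inl (add_zero 0)
    all_goals right; simp only [map_add, map_zero]; linarith
  | smul c a _ ha =>
    obtain ⟨c, hc⟩ := c
    rcases ha with rfl | ha
    · exact .inl (smul_zero _)
    rcases hc.eq_or_lt with rfl | hc
    · exact .inl (zero_smul _ a)
    · right
      change η ((c : ℝ) • a) < 0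
      rw [map_smul, smul_eq_mul]
      exact mul_neg_of_pos_of_neg hc ha

/-- One Fourier–Motzkin elimination step. -/
theorem hull_inter_setOf_nonneg (η : V →ₗ[ℝ] ℝ) (G : Set V) :
    (hull ℝ G : Set V) ∩ {x | 0 ≤ η x} = hull ℝ ({g ∈ G | 0 ≤ η g} ∪
      image2 (fun g h => η g • h - η h • g) {g ∈ G | 0 < η g} {h ∈ G | η h < 0}) := by
  set G' := {g ∈ G | 0 ≤ η g} ∪
      image2 (fun g h => η g • h - η h • g) {g ∈ G | 0 < η g} {h ∈ G | η h < 0}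
  ext x
  constructor
  · rintro ⟨hx, hηx⟩
    have hG : G ⊆ {g ∈ G | 0 ≤ η g} ∪ {h ∈ G | η h < 0} := fun g hg =>
      (le_or_gt 0 (η g)).imp (⟨hg, ·⟩) (⟨hg, ·⟩)
    have hx' : x ∈ hull ℝ {g ∈ G | 0 ≤ η g} ⊔ hull ℝ {h ∈ G | η h < 0} := by
      rw [← Submodule.span_union]; exact Submodule.span_mono hG hx
    obtain ⟨y, hy, z, hz, rfl⟩ := Submodule.mem_sup.mp hx'
    have hyG' : y ∈ hull ℝ G' := Submodule.span_mono subset_union_left hy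
    have hpair : η y • z - η z • y ∈ hull ℝ G' := by
      refine Submodule.span_le.mpr ?_ (smul_sub_smul_mem_hull_image2 η hy hz)
      rintro _ ⟨g, ⟨hg, hηg⟩, h, hh, rfl⟩
      rcases hηg.eq_or_lt with hηg | hηg
      · show η g • h - η h • g ∈ hull ℝ G'
        rw [← hηg, zero_smul, zero_sub, ← neg_smul]
        exact (hull ℝ G').smul_mem (neg_nonneg.mpr hh.2.le) (subset_hull (.inl ⟨hg, hηg.le⟩))
      · exact subset_hull (.inr ⟨g, ⟨hg, hηg⟩, h, hh, rfl⟩)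
    have hηy : 0 ≤ η y :=
      (Submodule.span_le (p := (positive ℝ ℝ).comap η)).mpr (fun g hg => hg.2) hy
    change 0 ≤ η (y + z) at hηx
    rw [map_add] at hηx
    rcases hηy.eq_or_lt with hηy | hηy
    · obtain rfl | hηz := eq_zero_or_neg_of_mem_hull η (fun h hh => hh.2) hz
      · rwa [add_zero]
      · linarith
    · have hsplit : y + z = (1 + η z / η y) • y + (η y)⁻¹ • (η y • z - η z • y) := by
        rw [smul_sub, smul_smul, smul_smul, inv_mul_cancel₀ hηy.ne', one_smul]
        module
      rw [hsplit]
      refine add_mem ((hull ℝ G').smul_mem ?_ hyG')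
        ((hull ℝ G').smul_mem (inv_nonneg.mpr hηy.le) hpair)
      rw [← div_self hηy.ne', ← add_div]
      exact div_nonneg hηx hηy.le
  · intro hx
    have : hull ℝ G' ≤ hull ℝ G ⊓ (positive ℝ ℝ).comap η := by
      refine Submodule.span_le.mpr ?_
      rintro _ (⟨hg, hηg⟩ | ⟨g, ⟨hg, hηg⟩, h, ⟨hh, hηh⟩, rfl⟩)
      · exact ⟨subset_hull hg, hηg⟩
      · refine ⟨?_, ?_⟩
        · show η g • h - η h • g ∈ hull ℝ G
          rw [sub_eq_add_neg, ← neg_smul]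
          exact add_mem ((hull ℝ G).smul_mem hηg.le (subset_hull hh))
            ((hull ℝ G).smul_mem (neg_nonneg.mpr hηh.le) (subset_hull hg))
        · show 0 ≤ η (η g • h - η h • g)
          simp only [map_sub, map_smul, smul_eq_mul, mul_comm, sub_self, le_refl]
    exact this hx

/-- Minkowski–Weyl. -/
theorem IsPolyhedralCone.exists_finset_hull_eq [FiniteDimensional ℝ V] {P : Set V}
    (hP : IsPolyhedralCone P) : ∃ G : Finset V, (hull ℝ (G : Set V) : Set V) = P := by
  classical
  obtain ⟨s, rfl⟩ := hP
  induction s using Finset.induction_on with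
  | empty =>
    let b := Module.finBasis ℝ V
    refine ⟨Finset.univ.image b ∪ Finset.univ.image (-b ·), ?_⟩
    ext x
    simp only [Finset.notMem_empty, IsEmpty.forall_iff, implies_true, mem_ofPred_eq, iff_true]
    rw [SetLike.mem_coe, ← b.sum_repr x]
    refine Submodule.sum_mem _ fun i _ => ?_
    rcases le_total 0 (b.repr x i) with h | h
    · exact smul_mem _ h (subset_hull (by simp))
    · rw [← neg_smul_neg]
      exact smul_mem _ (neg_nonneg.mpr h) (subset_hull (by simp))
  | insert η s _ ih =>
    obtain ⟨G, hG⟩ := ih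
    refine ⟨G.filter (0 ≤ η ·) ∪ Finset.image₂ (fun g h => η g • h - η h • g)
      (G.filter (0 < η ·)) (G.filter (η · < 0)), ?_⟩
    have step := hull_inter_setOf_nonneg η (G : Set V)
    simp only [Finset.mem_coe] at step
    push_cast
    rw [← step, hG]
    ext x
    simp only [mem_inter_iff, mem_ofPred_eq, Finset.forall_mem_insert, and_comm]

end MinkowskiWeyl

section Lattice

variable {V : Type*} [NormedAddCommGroup V] [NormedSpace ℝ V]

theorem AddSubgroup.finite_inter_closedBall [FiniteDimensional ℝ V] (L : AddSubgroup V)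
    [DiscreteTopology L] (R : ℝ) : ((L : Set V) ∩ closedBall 0 R).Finite := by
  rw [inter_comm]
  exact finite_isBounded_inter_isClosed DiscreteTopology.isDiscrete isBounded_closedBall
    L.isClosed_of_discrete

theorem exists_mem_span_int_norm_sub_le (T : Finset V) {x : V}
    (hx : x ∈ Submodule.span ℝ (T : Set V)) :
    ∃ w ∈ Submodule.span ℤ (T : Set V), ‖x - w‖ ≤ ∑ g ∈ T, ‖g‖ := by
  obtain ⟨f, -, rfl⟩ := Submodule.mem_span_finset.mp hx
  refine ⟨∑ g ∈ T, ⌊f g⌋ • g, Submodule.sum_mem _ fun g hg =>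
    Submodule.smul_mem _ _ (Submodule.subset_span hg), ?_⟩
  have hfract : ∑ g ∈ T, f g • g - ∑ g ∈ T, ⌊f g⌋ • g = ∑ g ∈ T, Int.fract (f g) • g := by
    rw [← Finset.sum_sub_distrib]
    refine Finset.sum_congr rfl fun g _ => ?_
    rw [← Int.cast_smul_eq_zsmul ℝ, ← sub_smul, Int.fract]
  rw [hfract]
  refine (norm_sum_le _ _).trans (Finset.sum_le_sum fun g _ => ?_)
  rw [norm_smul, Real.norm_of_nonneg (Int.fract_nonneg _)]
  exact mul_le_of_le_one_left (norm_nonneg g) (Int.fract_lt_one _).le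

/-- Pigeonhole on the remainders `k • q - w k`: scaled by `D` they lie in a bounded part of the
discrete group `M`. -/
theorem exists_pos_nsmul_mem_span_int [FiniteDimensional ℝ V] (M : AddSubgroup V)
    [DiscreteTopology M] (T : Finset V) {q : V} (hq : q ∈ Submodule.span ℝ (T : Set V))
    {D : ℕ} (hD : 0 < D) (hDq : D • q ∈ M) (hDT : ∀ g ∈ T, D • g ∈ M) :
    ∃ N : ℕ, 0 < N ∧ N • q ∈ Submodule.span ℤ (T : Set V) := by
  choose w hw hnorm using fun k : ℕ => exists_mem_span_int_norm_sub_le T (nsmul_mem hq k)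
  have hDw : ∀ v ∈ Submodule.span ℤ (T : Set V), D • v ∈ M := fun v hv => by
    induction hv using Submodule.span_induction with
    | mem g hg => exact hDT g hg
    | zero => simp
    | add a b _ _ ha hb => rw [nsmul_add]; exact add_mem ha hb
    | smul c a _ ha => rw [smul_comm]; exact zsmul_mem ha c
  have hmaps : ∀ k : ℕ, D • (k • q - w k) ∈ (M : Set V) ∩ closedBall 0 (D * ∑ g ∈ T, ‖g‖) := by
    intro k
    refine ⟨?_, ?_⟩
    · rw [nsmul_sub, smul_comm]
      exact sub_mem (nsmul_mem hDq k) (hDw _ (hw k))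
    · rw [mem_closedBall_zero_iff, ← Nat.cast_smul_eq_nsmul ℝ, norm_smul, Real.norm_natCast]
      exact mul_le_mul_of_nonneg_left (hnorm k) D.cast_nonneg
  obtain ⟨k, k', hkk', heq⟩ :=
    (M.finite_inter_closedBall _).exists_lt_map_eq_of_forall_mem hmaps
  refine ⟨k' - k, Nat.sub_pos_of_lt hkk', ?_⟩
  rw [← Nat.cast_smul_eq_nsmul ℝ D, ← Nat.cast_smul_eq_nsmul ℝ D] at heq
  have hdiff : k' • q - k • q = w k' - w k := sub_eq_sub_iff_sub_eq_sub.mpr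
    (smul_right_injective V (Nat.cast_ne_zero.mpr hD.ne') heq).symm
  rw [sub_nsmul q hkk'.le, ← sub_eq_add_neg, hdiff]
  exact sub_mem (hw k') (hw k)

/-- The `ℚ`-points `V(ℚ) = ℚ ⊗ L₀` of the `ℚ`-structure defined by the lattice `L₀`. -/
def rationalPoints (L₀ : AddSubgroup V) : Set V :=
  {v : V | ∃ (q : ℚ) (l : V), l ∈ L₀ ∧ v = (q : ℝ) • l}

theorem exists_pos_nsmul_mem_of_mem_rationalPoints {L₀ : AddSubgroup V} {v : V}
    (hv : v ∈ rationalPoints L₀) : ∃ m : ℕ, 0 < m ∧ m • v ∈ L₀ := by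
  obtain ⟨r, l, hl, rfl⟩ := hv
  refine ⟨r.den, r.pos, ?_⟩
  have hden : (r.den : ℝ) * r = r.num := by exact_mod_cast Rat.den_mul_eq_num r
  rw [← Nat.cast_smul_eq_nsmul ℝ, smul_smul, hden, Int.cast_smul_eq_zsmul]
  exact zsmul_mem hl r.num

theorem exists_pos_nsmul_mem_of_subset_rationalPoints {L₀ : AddSubgroup V} (S : Finset V)
    (hS : (S : Set V) ⊆ rationalPoints L₀) : ∃ D : ℕ, 0 < D ∧ ∀ v ∈ S, D • v ∈ L₀ := by
  classical
  induction S using Finset.induction_on with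
  | empty => exact ⟨1, one_pos, by simp⟩
  | insert v S _ ih =>
    rw [Finset.coe_insert, insert_subset_iff] at hS
    obtain ⟨m, hm, hmv⟩ := exists_pos_nsmul_mem_of_mem_rationalPoints hS.1
    obtain ⟨D, hD, hDS⟩ := ih hS.2
    refine ⟨D * m, Nat.mul_pos hD hm, Finset.forall_mem_insert _ _ _ |>.mpr ⟨?_, fun u hu => ?_⟩⟩
    · rw [mul_comm, mul_nsmul]; exact nsmul_mem hmv D
    · rw [mul_nsmul]; exact nsmul_mem (hDS u hu) m

theorem exists_pos_nsmul_mem [FiniteDimensional ℝ V] (L₀ L : AddSubgroup V) [DiscreteTopology L₀]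
    (hLspan : Submodule.span ℝ (L : Set V) = ⊤) (hLQ : (L : Set V) ⊆ rationalPoints L₀) {q : V}
    (hq : q ∈ rationalPoints L₀) : ∃ N : ℕ, 0 < N ∧ N • q ∈ L := by
  classical
  obtain ⟨T, hTL, hqT⟩ := Submodule.mem_span_finite_of_mem_span
    (hLspan ▸ Submodule.mem_top : q ∈ Submodule.span ℝ (L : Set V))
  obtain ⟨D, hD, hDS⟩ :=
    exists_pos_nsmul_mem_of_subset_rationalPoints (insert q T) (by
      rw [Finset.coe_insert]; exact insert_subset hq (hTL.trans hLQ))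
  obtain ⟨N, hN, hNq⟩ := exists_pos_nsmul_mem_span_int L₀ T hqT hD
    (hDS q (Finset.mem_insert_self q T)) (fun g hg => hDS g (Finset.mem_insert_of_mem hg))
  exact ⟨N, hN, (Submodule.span_le (p := L.toIntSubmodule)).mpr hTL hNq⟩

end Lattice

section Cone

variable {V : Type*} [NormedAddCommGroup V] [NormedSpace ℝ V]

namespace ConvexCone

theorem coe_hull_of_convex_of_smul_mem {s : Set V} (hs : Convex ℝ s)
    (hsmul : ∀ x ∈ s, ∀ t : ℝ, 0 < t → t • x ∈ s) : (ConvexCone.hull ℝ s : Set V) = s := by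
  refine subset_antisymm ?_ subset_hull
  rw [coe_hull_of_convex hs]
  rintro _ ⟨r, hr, y, hy, rfl⟩
  exact hsmul y hy r hr

variable {K : ConvexCone ℝ V}

theorem pointed_closure {x : V} (hx : x ∈ K) : K.closure.Pointed := by
  rw [Pointed, ← SetLike.mem_coe, coe_closure]
  have hlim : Tendsto (fun t : ℝ => t • x) (𝓝[>] 0) (𝓝 0) := by
    simpa using ((show Continuous fun t : ℝ => t • x by fun_prop).tendsto 0).mono_left
      nhdsWithin_le_nhds
  exact mem_closure_of_tendsto hlim (eventually_nhdsWithin_of_forall fun t ht => K.smul_mem ht hx)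

theorem add_mem_of_mem_closure (hK : IsOpen (K : Set V)) {a b : V} (ha : a ∈ K)
    (hb : b ∈ closure (K : Set V)) : a + b ∈ K := by
  have hmid := K.convex.combo_interior_closure_mem_interior (by rwa [hK.interior_eq]) hb
    (by norm_num : (0 : ℝ) < 1 / 2) (by norm_num : (0 : ℝ) ≤ 1 / 2) (by norm_num)
  rw [hK.interior_eq] at hmid
  convert K.smul_mem two_pos hmid using 1
  module

theorem sub_mem_of_sub_smul_mem_closure (hK : IsOpen (K : Set V)) {x u : V} {c : ℝ}
    (hx : x ∈ K) (hc : 1 < c) (hxu : x - c • u ∈ closure (K : Set V)) : x - u ∈ K := by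
  have hc₀ : 0 < c := one_pos.trans hc
  have hmem := K.convex.combo_interior_closure_mem_interior (by rwa [hK.interior_eq]) hxu
    (sub_pos.mpr (inv_lt_one_of_one_lt₀ hc)) (inv_nonneg.mpr hc₀.le) (sub_add_cancel 1 c⁻¹)
  rw [hK.interior_eq] at hmem
  have hcomb : x - u = (1 - c⁻¹) • x + c⁻¹ • (x - c • u) := by
    rw [smul_sub, smul_smul, inv_mul_cancel₀ hc₀.ne']
    module
  rwa [hcomb]

end ConvexCone

theorem eq_zero_of_add_mem_of_sub_mem {S : Set V} {x u : V} (hx : x ∈ extremePoints ℝ S)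
    (h₁ : x + u ∈ S) (h₂ : x - u ∈ S) : u = 0 :=
  sub_eq_self.mp <| hx.2 h₂ h₁ ⟨1 / 2, 1 / 2, by norm_num, by norm_num, by norm_num, by module⟩

theorem norm_le_of_mem_extremePoints_of_mem_hull {K : ConvexCone ℝ V} (hK : IsOpen (K : Set V))
    (L : AddSubgroup V) {A : Finset V} (hA : (A : Set V) ⊆ closure K ∩ L) {x : V}
    (hx : x ∈ extremePoints ℝ (convexHull ℝ ((K : Set V) ∩ L)))
    (hxA : x ∈ hull ℝ (A : Set V)) : ‖x‖ ≤ ∑ u ∈ A, ‖u‖ := by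
  classical
  have hxKL := extremePoints_convexHull_subset hx
  let Kbar : PointedCone ℝ V := K.closure.toPointedCone (ConvexCone.pointed_closure hxKL.1)
  obtain ⟨c, -, hxc⟩ := Submodule.mem_span_finset.mp hxA
  have hcoef : ∀ u ∈ A, u = 0 ∨ (c u : ℝ) ≤ 1 := by
    intro u hu
    by_contra! h
    have hrest : x - (c u : ℝ) • u ∈ closure (K : Set V) := by
      change x - c u • u ∈ Kbar
      rw [← hxc, ← Finset.add_sum_erase A _ hu, add_sub_cancel_left]
      exact Kbar.sum_mem fun v hv => Submodule.smul_mem _ _ (hA (Finset.mem_of_mem_erase hv)).1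
    have hsub := K.sub_mem_of_sub_smul_mem_closure hK hxKL.1 h.2 hrest
    have hadd := K.add_mem_of_mem_closure hK hxKL.1 (hA hu).1
    exact h.1 <| eq_zero_of_add_mem_of_sub_mem hx
      (subset_convexHull ℝ _ ⟨hadd, add_mem hxKL.2 (hA hu).2⟩)
      (subset_convexHull ℝ _ ⟨hsub, sub_mem hxKL.2 (hA hu).2⟩)
  rw [← hxc]
  refine (norm_sum_le _ _).trans (Finset.sum_le_sum fun u hu => ?_)
  rcases hcoef u hu with rfl | hcu
  · simp
  · change ‖(c u : ℝ) • u‖ ≤ ‖u‖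
    rw [norm_smul, Real.norm_of_nonneg (c u).2]
    exact mul_le_of_le_one_left (norm_nonneg u) hcu

theorem exists_finset_subset_of_subset_convexHull [FiniteDimensional ℝ V] {P K M : Set V}
    (hP : IsPolyhedralCone P) (hPK : P ⊆ convexHull ℝ K)
    (hKM : ∀ q ∈ K, ∃ c : ℝ, 0 < c ∧ c • q ∈ M) :
    ∃ A : Finset V, (A : Set V) ⊆ M ∧ P ⊆ hull ℝ (A : Set V) := by
  obtain ⟨G, rfl⟩ := hP.exists_finset_hull_eq
  have hK : K ⊆ hull ℝ M := fun q hq => by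
    obtain ⟨c, hc, hcq⟩ := hKM q hq
    simpa [smul_smul, inv_mul_cancel₀ hc.ne'] using
      (hull ℝ M).smul_mem (inv_nonneg.mpr hc.le) (subset_hull hcq)
  obtain ⟨A, hAM, hGA⟩ := Submodule.subset_span_finite_of_subset_span
    (subset_hull.trans (hPK.trans (convexHull_min hK (hull ℝ M).convex)))
  exact ⟨A, hAM, Submodule.span_le.mpr hGA⟩

theorem LinearEquiv.image_extremePoints_convexHull_inter (f : V ≃ₗ[ℝ] V) {C L : Set V}
    (hC : f '' C = C) (hL : f '' L = L) :
    f '' extremePoints ℝ (convexHull ℝ (C ∩ L)) = extremePoints ℝ (convexHull ℝ (C ∩ L)) := by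
  rw [image_extremePoints, ← f.coe_toLinearMap, f.toLinearMap.image_convexHull,
    f.coe_toLinearMap, image_inter f.injective, hC, hL]

end Cone

theorem stmt_12_general {V : Type*} [NormedAddCommGroup V] [NormedSpace ℝ V]
    [FiniteDimensional ℝ V]
    (C : Set V) (hCopen : IsOpen C) (hCconv : Convex ℝ C)
    (hCcone : ∀ x ∈ C, ∀ t : ℝ, 0 < t → t • x ∈ C)
    (L₀ : AddSubgroup V) (hL₀disc : DiscreteTopology L₀)
    (Q : Set V) (hQ : Q = {v : V | ∃ (q : ℚ) (l : V), l ∈ L₀ ∧ v = (q : ℝ) • l})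
    (Γ : Subgroup (LinearMap.GeneralLinearGroup ℝ V))
    (hΓC : ∀ γ ∈ Γ, (γ : V →ₗ[ℝ] V) '' C = C)
    (Pi : Set V) (hPi : IsPolyhedralCone Pi)
    (hPisub : Pi ⊆ convexHull ℝ (closure C ∩ Q))
    (hPicov : C ⊆ ⋃ γ ∈ Γ, (γ : V →ₗ[ℝ] V) '' Pi) :
    ∀ L : AddSubgroup V, DiscreteTopology L →
      Submodule.span ℝ (L : Set V) = ⊤ → (L : Set V) ⊆ Q →
      (∀ γ ∈ Γ, (γ : V →ₗ[ℝ] V) '' (L : Set V) = (L : Set V)) →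
      ∃ S : Set V, S.Finite ∧
        Set.extremePoints ℝ (convexHull ℝ (C ∩ (L : Set V))) ⊆
          ⋃ γ ∈ Γ, (γ : V →ₗ[ℝ] V) '' S := by
  intro L _ hLspan hLQ hΓL
  subst hQ
  obtain ⟨K, rfl⟩ : ∃ K : ConvexCone ℝ V, (K : Set V) = C :=
    ⟨_, ConvexCone.coe_hull_of_convex_of_smul_mem hCconv hCcone⟩
  have hscale : ∀ q ∈ closure (K : Set V) ∩ rationalPoints L₀,
      ∃ c : ℝ, 0 < c ∧ c • q ∈ closure (K : Set V) ∩ L := fun q hq => by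
    obtain ⟨N, hN, hNq⟩ := exists_pos_nsmul_mem L₀ L hLspan hLQ hq.2
    exact ⟨N, Nat.cast_pos.mpr hN, K.closure.smul_mem (Nat.cast_pos.mpr hN) hq.1,
      by rwa [Nat.cast_smul_eq_nsmul]⟩
  obtain ⟨A, hA, hPiA⟩ := exists_finset_subset_of_subset_convexHull hPi hPisub hscale
  set E := extremePoints ℝ (convexHull ℝ ((K : Set V) ∩ L))
  refine ⟨E ∩ Pi, (L.finite_inter_closedBall (∑ u ∈ A, ‖u‖)).subset fun x hx =>
    ⟨(extremePoints_convexHull_subset hx.1).2, mem_closedBall_zero_iff.mpr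
      (norm_le_of_mem_extremePoints_of_mem_hull hCopen L hA hx.1 (hPiA hx.2))⟩, ?_⟩
  intro x hx
  obtain ⟨γ, hγ, p, hp, rfl⟩ := mem_iUnion₂.mp (hPicov (extremePoints_convexHull_subset hx).1)
  have hE : γ.toLinearEquiv '' E = E :=
    γ.toLinearEquiv.image_extremePoints_convexHull_inter (hΓC γ hγ) (hΓL γ hγ)
  rw [← hE] at hx
  exact mem_iUnion₂.mpr ⟨γ, hγ, p, ⟨γ.toLinearEquiv.injective.mem_set_image.mp hx, hp⟩, rfl⟩

/-- Let `Γ ≤ GL(V)` preserve an open nondegenerate convex cone `C`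
and a lattice `L₀` (which defines the rational points `Q`). If some polyhedral
cone `Pi ⊆ C_+ := convexHull (closure C ∩ Q)` satisfies `Γ·Π ⊇ C`, then for every
`Γ`-invariant lattice `L ⊆ Q`, the group `Γ` has only finitely many orbits on the
set of extreme points of `convexHull (C ∩ L)`. -/
theorem stmt_12 {V : Type*} [NormedAddCommGroup V] [NormedSpace ℝ V]
    [FiniteDimensional ℝ V]
    (C : Set V) (hCopen : IsOpen C) (hCconv : Convex ℝ C) (hCne : C.Nonempty)
    (hCcone : ∀ x ∈ C, ∀ t : ℝ, 0 < t → t • x ∈ C)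
    (hCnd : ∀ x v : V, v ≠ 0 → ¬ ∀ t : ℝ, x + t • v ∈ C)
    (L₀ : AddSubgroup V) (hL₀disc : DiscreteTopology L₀)
    (hL₀span : Submodule.span ℝ (L₀ : Set V) = ⊤)
    (Q : Set V) (hQ : Q = {v : V | ∃ (q : ℚ) (l : V), l ∈ L₀ ∧ v = (q : ℝ) • l})
    (Γ : Subgroup (LinearMap.GeneralLinearGroup ℝ V))
    (hΓC : ∀ γ ∈ Γ, (γ : V →ₗ[ℝ] V) '' C = C)
    (hΓL₀ : ∀ γ ∈ Γ, (γ : V →ₗ[ℝ] V) '' (L₀ : Set V) = (L₀ : Set V))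
    (Pi : Set V) (hPi : IsPolyhedralCone Pi)
    (hPisub : Pi ⊆ convexHull ℝ (closure C ∩ Q))
    (hPicov : C ⊆ ⋃ γ ∈ Γ, (γ : V →ₗ[ℝ] V) '' Pi) :
    ∀ L : AddSubgroup V, DiscreteTopology L →
      Submodule.span ℝ (L : Set V) = ⊤ → (L : Set V) ⊆ Q →
      (∀ γ ∈ Γ, (γ : V →ₗ[ℝ] V) '' (L : Set V) = (L : Set V)) →
      ∃ S : Set V, S.Finite ∧
        Set.extremePoints ℝ (convexHull ℝ (C ∩ (L : Set V))) ⊆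
          ⋃ γ ∈ Γ, (γ : V →ₗ[ℝ] V) '' S :=
  stmt_12_general C hCopen hCconv hCcone L₀ hL₀disc Q hQ Γ hΓC Pi hPi hPisub hPicov
end

section
/- Let Γ and Γ' be subgroups of GL(V) both preserving the open nondegenerate cone C, both preserving lattices in V(ℚ), and suppose Γ' contains Γ as a subgroup of finite index. If (C_+, Γ) is of polyhedral type, then (C_+, Γ') is of polyhedral type; and conversely if Γ' is a finite-index subgroup of Γ and (C_+, Γ) is of polyhedral type then so is (C_+, Γ'). -/
/-- `(C_+, Γ)` is of polyhedral type: some polyhedral cone inside `C_+` has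
`Γ`-orbit equal to `C_+`. -/
def PolyhedralType {V : Type*} [NormedAddCommGroup V] [NormedSpace ℝ V]
    (Γ : Subgroup (LinearMap.GeneralLinearGroup ℝ V)) (Cp : Set V) : Prop :=
  ∃ Pi : Set V, IsPolyhedralCone Pi ∧ Pi ⊆ Cp ∧
    (⋃ γ ∈ Γ, (γ : V →ₗ[ℝ] V) '' Pi) = Cp

open Pointwise

/-!
Every `δ ∈ Γ'` preserves `C`, and it preserves `V(ℚ)` because it permutes a lattice `L ⊆ V(ℚ)`
whose `ℚ`-span is all of `V(ℚ)`: two full lattices inside `V(ℚ)` span `ℚ`-subspaces of the same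
dimension `dim V`. Hence `δ` preserves `C_+`. If `Γ ≤ Γ'`, the cone `Π` for `Γ` also works for `Γ'`.
If `Γ' ≤ Γ` has finite index, write `Γ = ⋃ Γ' r` over finitely many `r ∈ Γ` and take
`Π' = ∑ r Π`: it is polyhedral because Minkowski sums of polyhedral cones are (Fourier–Motzkin
elimination), it lies in the convex set `C_+` because it is a sum of cones lying there, and every
`γ Π = δ (r Π)` lies in `δ Π'`.
-/

theorem Finset.exists_between_of_forall_le {α : Type*} [LinearOrder α] [Nonempty α]
    {L U : Finset α} (h : ∀ l ∈ L, ∀ u ∈ U, l ≤ u) :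
    ∃ c : α, (∀ l ∈ L, l ≤ c) ∧ ∀ u ∈ U, c ≤ u := by
  rcases L.eq_empty_or_nonempty with rfl | hL
  · obtain ⟨c, hc⟩ := U.bddBelow
    exact ⟨c, by simp, fun u hu => hc hu⟩
  · exact ⟨L.max' hL, L.le_max', fun u hu => h _ (L.max'_mem hL) u hu⟩

theorem exists_forall_nonneg_add_mul_iff {𝕜 ι : Type*} [Field 𝕜] [LinearOrder 𝕜]
    [IsStrictOrderedRing 𝕜] (s : Finset ι) (a b : ι → 𝕜) :
    (∃ c : 𝕜, ∀ i ∈ s, 0 ≤ a i + c * b i) ↔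
      (∀ i ∈ s, b i = 0 → 0 ≤ a i) ∧
        ∀ i ∈ s, ∀ j ∈ s, 0 < b i → b j < 0 → 0 ≤ b i * a j - b j * a i := by
  constructor
  · rintro ⟨c, hc⟩
    refine ⟨fun i hi hbi => by simpa [hbi] using hc i hi, fun i hi j hj hbi hbj => ?_⟩
    nlinarith [mul_nonneg hbi.le (hc j hj), mul_nonneg (neg_nonneg.2 hbj.le) (hc i hi)]
  · rintro ⟨hzero, hpair⟩
    obtain ⟨c, hlow, hupp⟩ := Finset.exists_between_of_forall_le
      (L := (s.filter (0 < b ·)).image fun i => -a i / b i)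
      (U := (s.filter (b · < 0)).image fun j => -a j / b j) (by
        simp only [Finset.mem_image, Finset.mem_filter]
        rintro _ ⟨i, ⟨hi, hbi⟩, rfl⟩ _ ⟨j, ⟨hj, hbj⟩, rfl⟩
        rw [div_le_iff₀ hbi, div_mul_eq_mul_div, le_div_iff_of_neg hbj]
        linarith [hpair i hi j hj hbi hbj])
    refine ⟨c, fun i hi => ?_⟩
    rcases lt_trichotomy (b i) 0 with hbi | hbi | hbi
    · have := hupp _ (Finset.mem_image_of_mem _ (Finset.mem_filter.2 ⟨hi, hbi⟩))
      linarith [(le_div_iff_of_neg hbi).1 this]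
    · simpa [hbi] using hzero i hi hbi
    · have := hlow _ (Finset.mem_image_of_mem _ (Finset.mem_filter.2 ⟨hi, hbi⟩))
      linarith [(div_le_iff₀ hbi).1 this]

namespace IsPolyhedralCone

variable {V W : Type*} [AddCommGroup V] [Module ℝ V] [AddCommGroup W] [Module ℝ W]
  {P A B : Set V}

theorem zero_mem (hP : IsPolyhedralCone P) : (0 : V) ∈ P := by
  obtain ⟨s, rfl⟩ := hP
  simp

theorem smul_mem (hP : IsPolyhedralCone P) {c : ℝ} (hc : 0 ≤ c) {x : V} (hx : x ∈ P) :
    c • x ∈ P := by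
  obtain ⟨s, rfl⟩ := hP
  intro ξ hξ
  simpa using mul_nonneg hc (hx ξ hξ)

theorem inter (hA : IsPolyhedralCone A) (hB : IsPolyhedralCone B) :
    IsPolyhedralCone (A ∩ B) := by
  classical
  obtain ⟨s, rfl⟩ := hA
  obtain ⟨t, rfl⟩ := hB
  exact ⟨s ∪ t, by ext x; simp [or_imp, forall_and]⟩

theorem preimage (hP : IsPolyhedralCone P) (f : W →ₗ[ℝ] V) : IsPolyhedralCone (f ⁻¹' P) := by
  classical
  obtain ⟨s, rfl⟩ := hP
  exact ⟨s.image (·.comp f), by ext x; simp⟩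

theorem image_linearEquiv (hP : IsPolyhedralCone P) (e : V ≃ₗ[ℝ] W) :
    IsPolyhedralCone (e '' P) := by
  rw [e.image_eq_preimage_symm]
  exact hP.preimage e.symm.toLinearMap

/-- Fourier–Motzkin elimination of the direction `e`. -/
theorem exists_add_smul_mem (hP : IsPolyhedralCone P) (e : V) :
    IsPolyhedralCone {x | ∃ c : ℝ, x + c • e ∈ P} := by
  classical
  obtain ⟨s, rfl⟩ := hP
  refine ⟨s.filter (· e = 0) ∪
    ((s.filter (0 < · e)) ×ˢ (s.filter (· e < 0))).image fun p => p.1 e • p.2 - p.2 e • p.1, ?_⟩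
  ext x
  have := exists_forall_nonneg_add_mul_iff s (· x) (· e)
  simp only [Set.mem_ofPred_eq, map_add, map_smul, smul_eq_mul] at this ⊢
  rw [this]
  simp only [Finset.mem_union, or_imp, forall_and, Finset.forall_mem_image, Finset.mem_filter,
    Finset.mem_product, Prod.forall, and_imp, LinearMap.sub_apply, LinearMap.smul_apply,
    smul_eq_mul]
  exact and_congr_right fun _ => ⟨fun h i j hi hbi hj hbj => h i hi j hj hbi hbj,
    fun h i hi j hj hbi hbj => h i j hi hbi hj hbj⟩

theorem exists_add_mem_of_fg (hP : IsPolyhedralCone P) {W : Submodule ℝ V} (hW : W.FG) :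
    IsPolyhedralCone {x | ∃ w ∈ W, x + w ∈ P} := by
  classical
  obtain ⟨t, rfl⟩ := hW
  induction t using Finset.induction_on with
  | empty => simpa using hP
  | insert e t _ ih =>
    convert ih.exists_add_smul_mem e using 1
    ext x
    simp only [Finset.coe_insert, Submodule.mem_span_insert, Set.mem_ofPred_eq]
    constructor
    · rintro ⟨_, ⟨c, w, hw, rfl⟩, hx⟩
      exact ⟨c, w, hw, by rwa [add_assoc]⟩
    · rintro ⟨c, w, hw, hx⟩
      exact ⟨_, ⟨c, w, hw, rfl⟩, by rwa [← add_assoc]⟩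

theorem add [Module.Finite ℝ V] (hA : IsPolyhedralCone A) (hB : IsPolyhedralCone B) :
    IsPolyhedralCone (A + B) := by
  -- `x ∈ A + B` iff `(x, 0) + (0, y)` has `x - y ∈ A` and `y ∈ B` for some `y`.
  have hR := ((hA.preimage (LinearMap.fst ℝ V V - LinearMap.snd ℝ V V)).inter
    (hB.preimage (LinearMap.snd ℝ V V))).exists_add_mem_of_fg
    (Module.Finite.fg_top.map (LinearMap.inr ℝ V V))
  convert hR.preimage (LinearMap.inl ℝ V V) using 1
  ext x
  simp only [Set.mem_add, Submodule.map_top, LinearMap.mem_range, Set.mem_preimage,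
    Set.mem_inter_iff, Set.mem_ofPred_eq]
  constructor
  · rintro ⟨a, ha, b, hb, rfl⟩
    exact ⟨_, ⟨b, rfl⟩, by simpa using ha, by simpa using hb⟩
  · rintro ⟨_, ⟨b, rfl⟩, ha, hb⟩
    exact ⟨x - b, by simpa using ha, b, by simpa using hb, sub_add_cancel x b⟩

theorem add_subset {K : Set V} (hK : Convex ℝ K) (hA : IsPolyhedralCone A)
    (hB : IsPolyhedralCone B) (hAK : A ⊆ K) (hBK : B ⊆ K) : A + B ⊆ K := by
  rintro _ ⟨a, ha, b, hb, rfl⟩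
  -- `a + b` is the midpoint of `2 • a ∈ A` and `2 • b ∈ B`.
  have := hK (hAK (hA.smul_mem zero_le_two ha)) (hBK (hB.smul_mem zero_le_two hb))
    (by norm_num : (0 : ℝ) ≤ 1 / 2) (by norm_num : (0 : ℝ) ≤ 1 / 2) (by norm_num)
  simpa [smul_smul] using this

variable {ι : Type*} {s : Finset ι} {F : ι → Set V}

theorem finset_sum [Module.Finite ℝ V] (hs : s.Nonempty)
    (hF : ∀ i ∈ s, IsPolyhedralCone (F i)) : IsPolyhedralCone (∑ i ∈ s, F i) :=
  Finset.sum_induction_nonempty _ _ (fun _ _ => add) hs hF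

theorem finset_sum_subset [Module.Finite ℝ V] {K : Set V} (hK : Convex ℝ K) (hs : s.Nonempty)
    (hF : ∀ i ∈ s, IsPolyhedralCone (F i)) (hFK : ∀ i ∈ s, F i ⊆ K) : ∑ i ∈ s, F i ⊆ K :=
  (Finset.sum_induction_nonempty _ (fun S => IsPolyhedralCone S ∧ S ⊆ K)
    (fun _ _ hA hB => ⟨hA.1.add hB.1, add_subset hK hA.1 hB.1 hA.2 hB.2⟩) hs
    fun i hi => ⟨hF i hi, hFK i hi⟩).2

end IsPolyhedralCone

theorem Set.subset_finsetSum_of_zero_mem {ι α : Type*} [AddCommMonoid α] {s : Finset ι}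
    {f : ι → Set α} (h0 : ∀ i ∈ s, (0 : α) ∈ f i) {j : ι} (hj : j ∈ s) :
    f j ⊆ ∑ i ∈ s, f i := by
  classical
  rw [← Finset.add_sum_erase s f hj]
  refine Set.subset_add_left _ ?_
  simpa using Set.finsetSum_mem_finsetSum _ f 0 fun i hi => h0 i (Finset.mem_of_mem_erase hi)

theorem Subgroup.exists_finset_mul_eq_of_relIndex_ne_zero {G : Type*} [Group G]
    {H K : Subgroup G} (hHK : H.relIndex K ≠ 0) :
    ∃ R : Finset G, (R : Set G) ⊆ K ∧ ∀ k ∈ K, ∃ h ∈ H, ∃ r ∈ R, h * r = k := by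
  classical
  have : (H.subgroupOf K).FiniteIndex := ⟨hHK⟩
  obtain ⟨T, hT, -⟩ := (H.subgroupOf K).exists_isComplement_right 1
  refine ⟨hT.finite_right.toFinset.image (↑), by simp +contextual [Set.subset_def], fun k hk => ?_⟩
  obtain ⟨⟨⟨h, hh⟩, ⟨t, ht⟩⟩, hht⟩ := hT.2 ⟨k, hk⟩
  refine ⟨h, Subgroup.mem_subgroupOf.1 hh, t, by simpa using ht, ?_⟩
  simpa using congrArg Subtype.val hht

section PolyhedralType

variable {V : Type*} [NormedAddCommGroup V] [NormedSpace ℝ V]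
  {Γ Γ' : Subgroup (LinearMap.GeneralLinearGroup ℝ V)} {Cp : Set V}

theorem PolyhedralType.of_le (hle : Γ ≤ Γ') (hinv : ∀ δ ∈ Γ', (δ : V →ₗ[ℝ] V) '' Cp ⊆ Cp)
    (h : PolyhedralType Γ Cp) : PolyhedralType Γ' Cp := by
  obtain ⟨Pi, hPi, hPiCp, hcover⟩ := h
  refine ⟨Pi, hPi, hPiCp, subset_antisymm ?_ ?_⟩
  · exact Set.iUnion₂_subset fun δ hδ => (Set.image_mono hPiCp).trans (hinv δ hδ)
  · exact hcover.symm.subset.trans (Set.biUnion_subset_biUnion_left hle)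

theorem PolyhedralType.of_relIndex_ne_zero [FiniteDimensional ℝ V] (hidx : Γ'.relIndex Γ ≠ 0)
    (hinv : ∀ δ ∈ Γ', (δ : V →ₗ[ℝ] V) '' Cp ⊆ Cp) (hconv : Convex ℝ Cp)
    (h : PolyhedralType Γ Cp) : PolyhedralType Γ' Cp := by
  obtain ⟨Pi, hPi, hPiCp, hcover⟩ := h
  obtain ⟨R, hRΓ, hdecomp⟩ := Γ'.exists_finset_mul_eq_of_relIndex_ne_zero hidx
  have hR : R.Nonempty := let ⟨_, _, r, hr, _⟩ := hdecomp 1 Γ.one_mem; ⟨r, hr⟩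
  have hrPi : ∀ r ∈ R, IsPolyhedralCone ((r : V →ₗ[ℝ] V) '' Pi) := fun r _ =>
    hPi.image_linearEquiv (LinearMap.GeneralLinearGroup.toLinearEquiv r)
  have hrCp : ∀ r ∈ R, (r : V →ₗ[ℝ] V) '' Pi ⊆ Cp := fun r hr =>
    hcover ▸ Set.subset_biUnion_of_mem
      (u := fun γ : LinearMap.GeneralLinearGroup ℝ V => (γ : V →ₗ[ℝ] V) '' Pi) (hRΓ hr)
  have hPi'Cp : ∑ r ∈ R, (r : V →ₗ[ℝ] V) '' Pi ⊆ Cp :=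
    IsPolyhedralCone.finset_sum_subset hconv hR hrPi hrCp
  refine ⟨_, IsPolyhedralCone.finset_sum hR hrPi, hPi'Cp, subset_antisymm
    (Set.iUnion₂_subset fun δ hδ => (Set.image_mono hPi'Cp).trans (hinv δ hδ)) ?_⟩
  rw [← hcover]
  refine Set.iUnion₂_subset fun γ hγ => ?_
  obtain ⟨δ, hδ, r, hr, rfl⟩ := hdecomp γ hγ
  rintro _ ⟨p, hp, rfl⟩
  exact Set.mem_biUnion hδ ⟨_, Set.subset_finsetSum_of_zero_mem
    (fun r hr => (hrPi r hr).zero_mem) hr ⟨p, hp, rfl⟩, rfl⟩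

end PolyhedralType

theorem setOf_ratCast_smul_eq_span {V : Type*} [AddCommGroup V] [Module ℝ V] [Module ℚ V]
    (L : AddSubgroup V) :
    {v : V | ∃ (q : ℚ) (l : V), l ∈ L ∧ v = (q : ℝ) • l} = Submodule.span ℚ (L : Set V) := by
  simp_rw [Rat.cast_smul_eq_qsmul ℝ]
  ext v
  constructor
  · rintro ⟨q, l, hl, rfl⟩
    exact Submodule.smul_mem _ q (Submodule.subset_span hl)
  · intro hv
    induction hv using Submodule.span_induction with
    | mem l hl => exact ⟨1, l, hl, (one_smul _ _).symm⟩
    | zero => exact ⟨0, 0, L.zero_mem, (zero_smul _ _).symm⟩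
    | smul a _ _ hx =>
      obtain ⟨q, l, hl, rfl⟩ := hx
      exact ⟨a * q, l, hl, smul_smul a q l⟩
    | add _ _ _ _ hx hy =>
      obtain ⟨q₁, l₁, hl₁, rfl⟩ := hx
      obtain ⟨q₂, l₂, hl₂, rfl⟩ := hy
      -- common denominator `q₁.den * q₂.den`
      refine ⟨((q₁.den * q₂.den : ℕ) : ℚ)⁻¹, (q₁.num * q₂.den) • l₁ + (q₂.num * q₁.den) • l₂,
        L.add_mem (L.zsmul_mem hl₁ _) (L.zsmul_mem hl₂ _), ?_⟩
      rw [smul_add, ← Int.cast_smul_eq_zsmul ℚ, ← Int.cast_smul_eq_zsmul ℚ, smul_smul, smul_smul]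
      nth_rw 1 [← Rat.num_div_den q₁, ← Rat.num_div_den q₂]
      congr 2 <;> push_cast <;> field_simp

namespace ZLattice

variable {V : Type*} [NormedAddCommGroup V] [NormedSpace ℝ V] [FiniteDimensional ℝ V]
  [Module ℚ V] (L : Submodule ℤ V) [DiscreteTopology L] [IsZLattice ℝ L]

theorem span_rat_eq_span_range_basis {ι : Type*} (b : Module.Basis ι ℤ L) :
    Submodule.span ℚ (L : Set V) = Submodule.span ℚ (Set.range (b.ofZLatticeBasis ℝ L)) := by
  rw [← Submodule.span_span_of_tower ℤ ℚ (Set.range _), b.ofZLatticeBasis_span ℝ]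

theorem finiteDimensional_span_rat : FiniteDimensional ℚ (Submodule.span ℚ (L : Set V)) := by
  have := module_free ℝ L
  have := module_finite ℝ L
  rw [span_rat_eq_span_range_basis L (Module.Free.chooseBasis ℤ L)]
  exact FiniteDimensional.span_of_finite ℚ (Set.finite_range _)

theorem finrank_span_rat :
    Module.finrank ℚ (Submodule.span ℚ (L : Set V)) = Module.finrank ℝ V := by
  have := module_free ℝ L
  have := module_finite ℝ L
  let b := (Module.Free.chooseBasis ℤ L).ofZLatticeBasis ℝ L
  rw [span_rat_eq_span_range_basis L (Module.Free.chooseBasis ℤ L),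
    finrank_span_eq_card (b.linearIndependent.restrict_scalars' ℚ), Module.finrank_eq_card_basis b]

theorem span_rat_eq_of_subset {L₀ : Submodule ℤ V} [DiscreteTopology L₀] [IsZLattice ℝ L₀]
    (h : (L : Set V) ⊆ Submodule.span ℚ (L₀ : Set V)) :
    Submodule.span ℚ (L : Set V) = Submodule.span ℚ (L₀ : Set V) := by
  have := finiteDimensional_span_rat L₀
  exact Submodule.eq_of_le_of_finrank_le (Submodule.span_le.2 h)
    (by rw [finrank_span_rat, finrank_span_rat])

end ZLattice

section Invariance

variable {V : Type*} [NormedAddCommGroup V] [NormedSpace ℝ V]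

theorem image_setOf_ratCast_smul_eq [FiniteDimensional ℝ V] {L₀ L : AddSubgroup V}
    [DiscreteTopology L₀] [DiscreteTopology L] (hL₀ : Submodule.span ℝ (L₀ : Set V) = ⊤)
    (hL : Submodule.span ℝ (L : Set V) = ⊤)
    (hLQ : (L : Set V) ⊆ {v : V | ∃ (q : ℚ) (l : V), l ∈ L₀ ∧ v = (q : ℝ) • l})
    (f : V →ₗ[ℝ] V) (hf : f '' L = L) :
    f '' {v : V | ∃ (q : ℚ) (l : V), l ∈ L₀ ∧ v = (q : ℝ) • l} =
      {v : V | ∃ (q : ℚ) (l : V), l ∈ L₀ ∧ v = (q : ℝ) • l} := by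
  let _ : Module ℚ V := Module.compHom V (algebraMap ℚ ℝ)
  have : DiscreteTopology L₀.toIntSubmodule := ‹_›
  have : DiscreteTopology L.toIntSubmodule := ‹_›
  have : IsZLattice ℝ L₀.toIntSubmodule := ⟨hL₀⟩
  have : IsZLattice ℝ L.toIntSubmodule := ⟨hL⟩
  rw [setOf_ratCast_smul_eq_span] at hLQ ⊢
  have hspan : Submodule.span ℚ (L : Set V) = Submodule.span ℚ (L₀ : Set V) :=
    ZLattice.span_rat_eq_of_subset L.toIntSubmodule (L₀ := L₀.toIntSubmodule) hLQ
  rw [← hspan]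
  calc f '' Submodule.span ℚ (L : Set V)
      = Submodule.map f.toAddMonoidHom.toRatLinearMap (Submodule.span ℚ (L : Set V)) := rfl
    _ = Submodule.span ℚ (f '' L) := congrArg _ (Submodule.span_image _).symm
    _ = Submodule.span ℚ (L : Set V) := by rw [hf]

theorem ContinuousLinearEquiv.image_convexHull_closure_inter {C Q : Set V} (e : V ≃L[ℝ] V)
    (hC : e '' C = C) (hQ : e '' Q = Q) :
    e '' convexHull ℝ (closure C ∩ Q) = convexHull ℝ (closure C ∩ Q) := by
  rw [IsLinearMap.image_convexHull (f := e) e.toLinearMap.isLinear, Set.image_inter e.injective,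
    e.image_closure, hC, hQ]

end Invariance

theorem stmt_14_general {V : Type*} [NormedAddCommGroup V] [NormedSpace ℝ V]
    [FiniteDimensional ℝ V]
    (C : Set V)
    (L₀ : AddSubgroup V) (hL₀disc : DiscreteTopology L₀)
    (hL₀span : Submodule.span ℝ (L₀ : Set V) = ⊤)
    (Q : Set V) (hQ : Q = {v : V | ∃ (q : ℚ) (l : V), l ∈ L₀ ∧ v = (q : ℝ) • l})
    (Cp : Set V) (hCp : Cp = convexHull ℝ (closure C ∩ Q))
    (Γ Γ' : Subgroup (LinearMap.GeneralLinearGroup ℝ V))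
    (hΓ'C : ∀ γ ∈ Γ', (γ : V →ₗ[ℝ] V) '' C = C)
    (hΓ'lat : ∃ L : AddSubgroup V, DiscreteTopology L ∧
      Submodule.span ℝ (L : Set V) = ⊤ ∧ (L : Set V) ⊆ Q ∧
      ∀ γ ∈ Γ', (γ : V →ₗ[ℝ] V) '' (L : Set V) = (L : Set V)) :
    ((Γ ≤ Γ' ∧ Γ.relIndex Γ' ≠ 0) → PolyhedralType Γ Cp → PolyhedralType Γ' Cp) ∧
      ((Γ' ≤ Γ ∧ Γ'.relIndex Γ ≠ 0) → PolyhedralType Γ Cp → PolyhedralType Γ' Cp) := by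
  obtain ⟨L, hLdisc, hLspan, hLQ, hΓ'L⟩ := hΓ'lat
  have hinv : ∀ δ ∈ Γ', (δ : V →ₗ[ℝ] V) '' Cp ⊆ Cp := by
    intro δ hδ
    subst hQ hCp
    exact (ContinuousLinearEquiv.image_convexHull_closure_inter
      (LinearMap.GeneralLinearGroup.toLinearEquiv δ).toContinuousLinearEquiv (hΓ'C δ hδ)
      (image_setOf_ratCast_smul_eq hL₀span hLspan hLQ _ (hΓ'L δ hδ))).le
  have hconv : Convex ℝ Cp := hCp ▸ convex_convexHull ℝ _
  exact ⟨fun ⟨hle, _⟩ => .of_le hle hinv, fun ⟨_, hidx⟩ => .of_relIndex_ne_zero hidx hinv hconv⟩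

/-- Let `Γ, Γ'` be subgroups of `GL(V)` preserving the open
nondegenerate convex cone `C` and each preserving some lattice in `V(ℚ)`. If
`Γ ≤ Γ'` with finite index and `(C_+, Γ)` is of polyhedral type, then so is
`(C_+, Γ')`; and if `Γ' ≤ Γ` with finite index and `(C_+, Γ)` is of polyhedral
type, then so is `(C_+, Γ')`. -/
theorem stmt_14 {V : Type*} [NormedAddCommGroup V] [NormedSpace ℝ V]
    [FiniteDimensional ℝ V]
    (C : Set V) (hCopen : IsOpen C) (hCconv : Convex ℝ C) (hCne : C.Nonempty)
    (hCcone : ∀ x ∈ C, ∀ t : ℝ, 0 < t → t • x ∈ C)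
    (hCnd : ∀ x v : V, v ≠ 0 → ¬ ∀ t : ℝ, x + t • v ∈ C)
    (L₀ : AddSubgroup V) (hL₀disc : DiscreteTopology L₀)
    (hL₀span : Submodule.span ℝ (L₀ : Set V) = ⊤)
    (Q : Set V) (hQ : Q = {v : V | ∃ (q : ℚ) (l : V), l ∈ L₀ ∧ v = (q : ℝ) • l})
    (Cp : Set V) (hCp : Cp = convexHull ℝ (closure C ∩ Q))
    (Γ Γ' : Subgroup (LinearMap.GeneralLinearGroup ℝ V))
    (hΓC : ∀ γ ∈ Γ, (γ : V →ₗ[ℝ] V) '' C = C)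
    (hΓ'C : ∀ γ ∈ Γ', (γ : V →ₗ[ℝ] V) '' C = C)
    (hΓlat : ∃ L : AddSubgroup V, DiscreteTopology L ∧
      Submodule.span ℝ (L : Set V) = ⊤ ∧ (L : Set V) ⊆ Q ∧
      ∀ γ ∈ Γ, (γ : V →ₗ[ℝ] V) '' (L : Set V) = (L : Set V))
    (hΓ'lat : ∃ L : AddSubgroup V, DiscreteTopology L ∧
      Submodule.span ℝ (L : Set V) = ⊤ ∧ (L : Set V) ⊆ Q ∧
      ∀ γ ∈ Γ', (γ : V →ₗ[ℝ] V) '' (L : Set V) = (L : Set V)) :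
    ((Γ ≤ Γ' ∧ Γ.relIndex Γ' ≠ 0) → PolyhedralType Γ Cp → PolyhedralType Γ' Cp) ∧
      ((Γ' ≤ Γ ∧ Γ'.relIndex Γ ≠ 0) → PolyhedralType Γ Cp → PolyhedralType Γ' Cp) :=
  stmt_14_general C L₀ hL₀disc hL₀span Q hQ Cp hCp Γ Γ' hΓ'C hΓ'lat
end
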